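/- arXiv:1309.3884 — 10 statements merged into one kernel-verified Lean document; each statement's English description precedes it below -/
import Mathlib

section
/- If H is a transitive subgroup of Sym_n, then the element x_1^l is central in the monoid S_{n,l}(H). -/
/-- The rewriting relation for the permutation-relation monoid `S_{n,l}(H)`. -/
def permRel (n l : ℕ) (H : Subgroup (Equiv.Perm (Fin n))) :
    FreeMonoid (Fin n) → FreeMonoid (Fin n) → Prop := fun a b =>
  ∃ σ ∈ H, ∃ w : Fin l → Fin n,
    a = FreeMonoid.ofList (List.ofFn fun i => w i) ∧
    b = FreeMonoid.ofList (List.ofFn fun i => σ (w i))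

/-- The congruence on the free monoid generated by the permutation relations. -/
def permCon (n l : ℕ) (H : Subgroup (Equiv.Perm (Fin n))) : Con (FreeMonoid (Fin n)) :=
  conGen (permRel n l H)

/-- The monoid `S_{n,l}(H)`. -/
abbrev SM (n l : ℕ) (H : Subgroup (Equiv.Perm (Fin n))) := (permCon n l H).Quotient

/-- The generator `x_i` of `S_{n,l}(H)`. -/
def xg (n l : ℕ) (H : Subgroup (Equiv.Perm (Fin n))) (i : Fin n) : SM n l H :=
  (permCon n l H).mk' (FreeMonoid.of i)

theorem commute_pow_of_prod_map_perm {α M : Type*} [Monoid M] (x : α → M) {l : ℕ} (hl : 0 < l)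
    (σ : Equiv.Perm α) (hσ : ∀ L : List α, L.length = l → (L.map x).prod = (L.map (x ∘ σ)).prod)
    {i j : α} (hij : σ i = j) : Commute (x i) (x j ^ l) := by
  obtain ⟨m, rfl⟩ := Nat.exists_eq_add_one_of_ne_zero hl.ne'
  have hσ_inv (L : List α) (hL : L.length = m + 1) :
      (L.map (x ∘ σ.symm)).prod = (L.map x).prod := by
    simpa [Function.comp_def] using hσ (L.map σ.symm) (by simpa using hL)
  have hji : σ.symm j = i := by rw [← hij, Equiv.symm_apply_apply]
  -- `σ` turns the word `i j^m` into `j (σ j)^m`, and `σ⁻¹` turns `(σ j)^m j` into `j^m i`.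
  have forward : x i * x j ^ m = x j * x (σ j) ^ m := by
    simpa [List.map_replicate, hij] using hσ (i :: List.replicate m j) (by simp)
  have backward : x (σ j) ^ m * x j = x j ^ m * x i := by
    simpa [List.map_replicate, hji] using (hσ_inv (List.replicate m (σ j) ++ [j]) (by simp)).symm
  calc x i * x j ^ (m + 1) = x i * x j ^ m * x j := by rw [pow_succ, mul_assoc]
    _ = x j * (x (σ j) ^ m * x j) := by rw [forward, mul_assoc]
    _ = x j ^ (m + 1) * x i := by rw [backward, pow_succ', mul_assoc]

section

variable {n l : ℕ} {H : Subgroup (Equiv.Perm (Fin n))}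

theorem permCon_mk'_ofList (L : List (Fin n)) :
    (permCon n l H).mk' (FreeMonoid.ofList L) = (L.map (xg n l H)).prod := by
  rw [← FreeMonoid.lift_ofList]
  congr 1
  exact FreeMonoid.hom_eq fun _ => rfl

theorem SM.exists_eq_prod_map_xg (s : SM n l H) : ∃ L : List (Fin n), s = (L.map (xg n l H)).prod := by
  obtain ⟨w, rfl⟩ := (permCon n l H).mk'_surjective s
  exact ⟨w.toList, permCon_mk'_ofList w.toList⟩

theorem prod_map_xg_perm {σ : Equiv.Perm (Fin n)} (hσ : σ ∈ H) (L : List (Fin n))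
    (hL : L.length = l) : (L.map (xg n l H)).prod = (L.map (xg n l H ∘ σ)).prod := by
  subst hL
  rw [← List.map_map, ← permCon_mk'_ofList, ← permCon_mk'_ofList]
  exact (permCon n _ H).eq.2 <| ConGen.Rel.of _ _
    ⟨σ, hσ, L.get, by rw [List.ofFn_get],
      by rw [← List.ofFn_get L, List.map_ofFn, List.ofFn_get]; rfl⟩

end

theorem x1_pow_central_of_transitive_general (n l : ℕ) (hn : 0 < n) (H : Subgroup (Equiv.Perm (Fin n)))
    (htrans : ∀ i j : Fin n, ∃ σ ∈ H, σ i = j) (s : SM n l H) :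
    s * xg n l H ⟨0, hn⟩ ^ l = xg n l H ⟨0, hn⟩ ^ l * s := by
  rcases Nat.eq_zero_or_pos l with rfl | hl
  · simp
  obtain ⟨L, rfl⟩ := SM.exists_eq_prod_map_xg s
  refine (Commute.list_prod_left _ _ fun y hy => ?_).eq
  obtain ⟨i, -, rfl⟩ := List.mem_map.1 hy
  obtain ⟨σ, hσ, hσi⟩ := htrans i ⟨0, hn⟩
  exact commute_pow_of_prod_map_perm _ hl σ (prod_map_xg_perm hσ) hσi

theorem x1_pow_central_of_transitive (n l : ℕ) (hn : 0 < n) (hl : 2 ≤ l) (H : Subgroup (Equiv.Perm (Fin n)))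
    (htrans : ∀ i j : Fin n, ∃ σ ∈ H, σ i = j) (s : SM n l H) :
    s * xg n l H ⟨0, hn⟩ ^ l = xg n l H ⟨0, hn⟩ ^ l * s :=
  x1_pow_central_of_transitive_general n l hn H htrans s
end

section
/- In S_{n,l}(H), if x_{j_1}⋯x_{j_t} = x_{k_1}⋯x_{k_u}, then t = u and for each p ∈ {1,...,t}, the index k_p lies in the H-orbit of j_p. -/
open MulAction

section

variable {n l : ℕ} {H : Subgroup (Equiv.Perm (Fin n))}

theorem prod_map_xg (ws : List (Fin n)) :
    (ws.map (xg n l H)).prod = (permCon n l H).mk' (FreeMonoid.ofList ws) := by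
  rw [← FreeMonoid.lift_ofList]
  exact DFunLike.congr_fun (FreeMonoid.hom_eq (f := FreeMonoid.lift (xg n l H))
    (g := (permCon n l H).mk') fun _ => rfl) _

variable (H) in
abbrev orbitWord : FreeMonoid (Fin n) →* FreeMonoid (orbitRel.Quotient H (Fin n)) :=
  FreeMonoid.map Quotient.mk''

theorem orbitWord_eq_of_permRel {a b : FreeMonoid (Fin n)} (hab : permRel n l H a b) :
    orbitWord H a = orbitWord H b := by
  obtain ⟨σ, hσ, w, rfl, rfl⟩ := hab
  simp only [← FreeMonoid.ofList_map, List.map_ofFn]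
  congr 2
  funext i
  exact (Quotient.sound (mem_orbit (w i) (⟨σ, hσ⟩ : H))).symm

theorem permCon_le_ker_orbitWord : permCon n l H ≤ Con.ker (orbitWord H) :=
  Con.conGen_le.mpr fun _ _ => orbitWord_eq_of_permRel

theorem map_orbit_eq_of_prod_map_xg_eq {js ks : List (Fin n)}
    (h : (js.map (xg n l H)).prod = (ks.map (xg n l H)).prod) :
    js.map (Quotient.mk'' : Fin n → orbitRel.Quotient H (Fin n)) = ks.map Quotient.mk'' := by
  rw [prod_map_xg, prod_map_xg] at h
  simpa [← FreeMonoid.ofList_map] using permCon_le_ker_orbitWord ((Con.eq _).mp h)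

end

theorem length_eq_and_orbit_of_word_eq_general (n l : ℕ) (H : Subgroup (Equiv.Perm (Fin n)))
    (js ks : List (Fin n))
    (h : (List.map (xg n l H) js).prod = (List.map (xg n l H) ks).prod) :
    js.length = ks.length ∧
      ∀ (p : ℕ) (hp : p < js.length) (hp' : p < ks.length),
        ∃ σ ∈ H, σ (js[p]'hp) = ks[p]'hp' := by
  have horb := map_orbit_eq_of_prod_map_xg_eq h
  refine ⟨by simpa using congrArg List.length horb, fun p hp hp' => ?_⟩
  have hp_eq := List.getElem_of_eq horb (by simpa using hp)
  rw [List.getElem_map, List.getElem_map] at hp_eq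
  obtain ⟨σ, hσ⟩ := Quotient.exact hp_eq.symm
  exact ⟨σ, σ.2, hσ⟩

theorem length_eq_and_orbit_of_word_eq (n l : ℕ) (hl : 2 ≤ l) (H : Subgroup (Equiv.Perm (Fin n)))
    (js ks : List (Fin n))
    (h : (List.map (xg n l H) js).prod = (List.map (xg n l H) ks).prod) :
    js.length = ks.length ∧
      ∀ (p : ℕ) (hp : p < js.length) (hp' : p < ks.length),
        ∃ σ ∈ H, σ (js[p]'hp) = ks[p]'hp' :=
  length_eq_and_orbit_of_word_eq_general n l H js ks h
end

section
/- Let X_{i_1}, ..., X_{i_r} be the distinct H-orbits on {1,...,n}, with chosen representatives i_1, ..., i_r. Then the submonoid of S_{n,l}(H) generated by x_{i_1}, ..., x_{i_r} is a free monoid on the basis {x_{i_1}, ..., x_{i_r}}. -/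
/-!
Sending each generator `x_j` to the letter of the orbit of `j` respects every defining relation,
since the relations only permute letters inside their `H`-orbits. This gives a monoid map from
`S_{n,l}(H)` to the free monoid on the orbits which is a left inverse of the map `t ↦ x_{i_t}`.
-/

section

variable {n l : ℕ} {H : Subgroup (Equiv.Perm (Fin n))}

theorem permCon_le_ker_lift {M : Type*} [Monoid M] (g : Fin n → M)
    (hg : ∀ σ ∈ H, ∀ j, g (σ j) = g j) : permCon n l H ≤ Con.ker (FreeMonoid.lift g) := by
  refine Con.conGen_le.mpr ?_
  rintro _ _ ⟨σ, hσ, w, rfl, rfl⟩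
  change FreeMonoid.lift g _ = FreeMonoid.lift g _
  simp only [FreeMonoid.lift_ofList, List.map_ofFn, Function.comp_def, hg σ hσ]

theorem injective_lift_xg_of_leftInverse {α : Type*} (reps : α → Fin n) (f : Fin n → α)
    (hf : Function.LeftInverse f reps) (hinv : ∀ σ ∈ H, ∀ j, f (σ j) = f j) :
    Function.Injective (FreeMonoid.lift fun a => xg n l H (reps a)) := by
  let retraction : SM n l H →* FreeMonoid α :=
    (permCon n l H).lift _ (permCon_le_ker_lift (FreeMonoid.of ∘ f) fun σ hσ j => by
      simp only [Function.comp_apply, hinv σ hσ j])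
  have hcomp : retraction.comp (FreeMonoid.lift fun a => xg n l H (reps a)) = .id _ :=
    FreeMonoid.hom_eq fun a => by
      change FreeMonoid.of (f (reps a)) = FreeMonoid.of a
      rw [hf a]
  exact Function.LeftInverse.injective (g := retraction) (DFunLike.congr_fun hcomp)

end

theorem orbit_reps_generate_free_submonoid_general (n l : ℕ) (H : Subgroup (Equiv.Perm (Fin n)))
    (r : ℕ) (reps : Fin r → Fin n)
    (horb : ∀ j : Fin n, ∃! t : Fin r, ∃ σ ∈ H, σ (reps t) = j) :
    Function.Injective (FreeMonoid.lift fun t => xg n l H (reps t)) := by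
  choose f hf using fun j => (horb j).exists
  refine injective_lift_xg_of_leftInverse reps f
    (fun t => (horb (reps t)).unique (hf (reps t)) ⟨1, H.one_mem, rfl⟩) fun σ hσ j => ?_
  obtain ⟨τ, hτ, hτj⟩ := hf j
  exact (horb (σ j)).unique (hf (σ j)) ⟨σ * τ, H.mul_mem hσ hτ, by rw [Equiv.Perm.mul_apply, hτj]⟩

theorem orbit_reps_generate_free_submonoid (n l : ℕ) (hl : 2 ≤ l) (H : Subgroup (Equiv.Perm (Fin n)))
    (r : ℕ) (reps : Fin r → Fin n)
    (horb : ∀ j : Fin n, ∃! t : Fin r, ∃ σ ∈ H, σ (reps t) = j) :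
    Function.Injective (FreeMonoid.lift fun t => xg n l H (reps t)) :=
  orbit_reps_generate_free_submonoid_general n l H r reps horb
end

section
/- If H is a semi-regular abelian subgroup of Sym_n, then the monoid S_{n,l}(H) is cancellative (both left and right cancellative). -/
/-!
Let an abelian group `G` act freely on the letters. Then `u ~ v` exactly when `v` arises from `u`
by acting at each position `k` by `c k`, for some `c : ℕ → G` in the subgroup generated by the
window vectors (`g` on a window `[t, t + l)` inside the word, `1` elsewhere): the relations are
window vectors, and a product of window vectors is realised by a chain of relations.

If `x u ~ x v` through `c`, freeness forces `c 0 = 1`. Position `0` lies only in the first window,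
so `c 0` is that window's coefficient, and since `G` is abelian, removing it and shifting left is a
homomorphism mapping the window span for length `m + 1` into the one for length `m`; this
gives `u ~ v`. Right cancellation works the same way with the last window.
-/

open FreeMonoid

theorem Con.isCancelMul_quotient {M : Type*} [Monoid M] (c : Con M)
    (left : ∀ a b d, c (a * b) (a * d) → c b d) (right : ∀ a b d, c (b * a) (d * a) → c b d) :
    IsCancelMul c.Quotient := by
  refine { mul_left_cancel := ?_, mul_right_cancel := ?_ } <;> rintro ⟨a⟩ ⟨b⟩ ⟨d⟩ h
  · exact c.eq.2 (left a b d (c.eq.1 h))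
  · exact c.eq.2 (right a b d (c.eq.1 h))

section Group

variable {G α : Type*} [Group G] [MulAction G α]

variable (G) in
def windowRel (l : ℕ) (a b : FreeMonoid α) : Prop :=
  ∃ (g : G) (w : Fin l → α), a = ofList (List.ofFn w) ∧ b = ofList (List.ofFn fun i => g • w i)

variable (G) in
def windowCon (l : ℕ) : Con (FreeMonoid α) :=
  conGen (windowRel G l)

def smulIdx (c : ℕ → G) (u : List α) : List α :=
  u.mapIdx fun k x => c k • x

@[simp]
theorem length_smulIdx (c : ℕ → G) (u : List α) : (smulIdx c u).length = u.length :=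
  List.length_mapIdx

theorem smulIdx_congr {c d : ℕ → G} {u : List α} (h : ∀ k < u.length, c k = d k) :
    smulIdx c u = smulIdx d u :=
  List.mapIdx_eq_mapIdx_iff.2 fun k hk => by rw [h k hk]

theorem smulIdx_eq_self {c : ℕ → G} {u : List α} (h : ∀ k < u.length, c k = 1) :
    smulIdx c u = u := by
  rw [smulIdx_congr h]
  simp [smulIdx, List.mapIdx_eq_iff]

@[simp]
theorem smulIdx_one (u : List α) : smulIdx (1 : ℕ → G) u = u :=
  smulIdx_eq_self fun _ _ => rfl

theorem smulIdx_mul (c d : ℕ → G) (u : List α) :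
    smulIdx (c * d) u = smulIdx c (smulIdx d u) := by
  simp [smulIdx, Function.comp_def, mul_smul]

theorem smulIdx_inv_smulIdx (c : ℕ → G) (u : List α) : smulIdx c⁻¹ (smulIdx c u) = u := by
  rw [← smulIdx_mul, inv_mul_cancel, smulIdx_one]

theorem smulIdx_cons (c : ℕ → G) (x : α) (u : List α) :
    smulIdx c (x :: u) = c 0 • x :: smulIdx (fun k => c (k + 1)) u :=
  List.mapIdx_cons

theorem smulIdx_append (c : ℕ → G) (u v : List α) :
    smulIdx c (u ++ v) = smulIdx c u ++ smulIdx (fun k => c (k + u.length)) v :=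
  List.mapIdx_append

theorem smulIdx_concat (c : ℕ → G) (u : List α) (x : α) :
    smulIdx c (u ++ [x]) = smulIdx c u ++ [c u.length • x] :=
  List.mapIdx_concat

variable (l : ℕ)

def windowVec (t : ℕ) (g : G) : ℕ → G :=
  fun k => if t ≤ k ∧ k < t + l then g else 1

def windowSpan (m : ℕ) : Subgroup (ℕ → G) :=
  Subgroup.closure {windowVec l t g | (t : ℕ) (g : G) (_ : t + l ≤ m)}

variable {l}

theorem windowVec_mem_windowSpan {t m : ℕ} (g : G) (h : t + l ≤ m) :
    windowVec l t g ∈ windowSpan l m :=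
  Subgroup.subset_closure ⟨t, g, h, rfl⟩

theorem windowSpan_mono {m m' : ℕ} (h : m ≤ m') : windowSpan (G := G) l m ≤ windowSpan l m' :=
  Subgroup.closure_mono fun _ ⟨t, g, ht, hc⟩ => ⟨t, g, ht.trans h, hc⟩

theorem apply_eq_one_of_mem_windowSpan {m k : ℕ} {c : ℕ → G} (hc : c ∈ windowSpan l m)
    (hk : m ≤ k) : c k = 1 := by
  induction hc using Subgroup.closure_induction with
  | mem _ h =>
    obtain ⟨t, g, ht, rfl⟩ := h
    exact if_neg (by omega)
  | one => rfl
  | mul _ _ _ _ h h' => simp [h, h']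
  | inv _ _ h => simp [h]

theorem map_mem_windowSpan {m m' : ℕ} (f : (ℕ → G) →* (ℕ → G))
    (hf : ∀ t g, t + l ≤ m → f (windowVec l t g) ∈ windowSpan l m') {c : ℕ → G}
    (hc : c ∈ windowSpan l m) : f c ∈ windowSpan l m' := by
  refine (Subgroup.closure_le ((windowSpan l m').comap f)).2 ?_ hc
  rintro _ ⟨t, g, ht, rfl⟩
  exact hf t g ht

def shiftRight (m : ℕ) : (ℕ → G) →* (ℕ → G) :=
  MonoidHom.mk' (fun c k => if m ≤ k then c (k - m) else 1) fun c d => by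
    funext k
    split_ifs <;> simp [*]

theorem shiftRight_mem_windowSpan {m m' : ℕ} {c : ℕ → G} (hc : c ∈ windowSpan l m') :
    shiftRight m c ∈ windowSpan l (m + m') := by
  refine map_mem_windowSpan _ (fun t g ht => ?_) hc
  have : shiftRight m (windowVec l t g) = windowVec l (m + t) g := by
    funext k
    simp only [shiftRight, windowVec, MonoidHom.mk'_apply]
    split_ifs <;> first | rfl | omega
  exact this ▸ windowVec_mem_windowSpan g (by omega)

variable (G l) in
def WindowEquiv (u v : List α) : Prop :=
  ∃ c ∈ windowSpan (G := G) l u.length, v = smulIdx c u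

namespace WindowEquiv

variable {u v w u' v' : List α}

protected theorem refl (u : List α) : WindowEquiv G l u u :=
  ⟨1, one_mem _, (smulIdx_one u).symm⟩

protected theorem symm (h : WindowEquiv G l u v) : WindowEquiv G l v u := by
  obtain ⟨c, hc, rfl⟩ := h
  exact ⟨c⁻¹, by simpa using inv_mem hc, (smulIdx_inv_smulIdx c u).symm⟩

protected theorem trans (h : WindowEquiv G l u v) (h' : WindowEquiv G l v w) :
    WindowEquiv G l u w := by
  obtain ⟨c, hc, rfl⟩ := h
  obtain ⟨d, hd, rfl⟩ := h'
  exact ⟨d * c, mul_mem (by simpa using hd) hc, (smulIdx_mul d c u).symm⟩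

theorem append (h : WindowEquiv G l u v) (h' : WindowEquiv G l u' v') :
    WindowEquiv G l (u ++ u') (v ++ v') := by
  obtain ⟨c, hc, rfl⟩ := h
  obtain ⟨d, hd, rfl⟩ := h'
  refine ⟨c * shiftRight u.length d, mul_mem ?_ ?_, ?_⟩
  · exact windowSpan_mono (by simp) hc
  · simpa using shiftRight_mem_windowSpan (m := u.length) hd
  rw [smulIdx_append]
  congr 1 <;> refine smulIdx_congr fun k hk => ?_
  · simp [shiftRight, hk]
  · simp [shiftRight, apply_eq_one_of_mem_windowSpan hc (Nat.le_add_left _ k)]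

end WindowEquiv

variable (G l) in
def windowEquivCon : Con (FreeMonoid α) where
  r a b := WindowEquiv G l a.toList b.toList
  iseqv := ⟨fun _ => .refl _, .symm, .trans⟩
  mul' := .append

theorem windowCon_le_windowEquivCon : windowCon G l ≤ windowEquivCon (α := α) G l := by
  refine Con.conGen_le.2 fun a b ⟨g, w, ha, hb⟩ => ⟨windowVec l 0 g, ?_, ?_⟩
  · exact windowVec_mem_windowSpan g (by simp [ha])
  · subst ha hb
    refine List.ext_getElem (by simp) fun k hk _ => ?_
    simp only [toList_ofList, List.length_ofFn] at hk
    simp [smulIdx, windowVec, hk]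

theorem windowRel_ofList_map_smul (g : G) {u : List α} (hu : u.length = l) :
    windowRel G l (ofList u) (ofList (u.map (g • ·))) := by
  subst hu
  exact ⟨g, u.get, by rw [List.ofFn_get], congrArg ofList (List.ext_getElem (by simp) (by simp))⟩

theorem windowCon_ofList_smulIdx_windowVec (g : G) {t : ℕ} {u : List α}
    (h : t + l ≤ u.length) : windowCon G l (ofList u) (ofList (smulIdx (windowVec l t g) u)) := by
  obtain ⟨A, B, C, rfl, hA, hB⟩ : ∃ A B C : List α, u = A ++ (B ++ C) ∧ A.length = t ∧ B.length = l :=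
    ⟨u.take t, (u.drop t).take l, (u.drop t).drop l, by simp, by simp; omega, by simp; omega⟩
  have hsmul : smulIdx (windowVec l t g) (A ++ (B ++ C)) = A ++ (B.map (g • ·) ++ C) := by
    have hsmulB : smulIdx (fun k => windowVec l t g (k + A.length)) B = B.map (g • ·) := by
      refine List.ext_getElem (by simp) fun k hk _ => ?_
      simp only [length_smulIdx] at hk
      simp only [smulIdx, List.getElem_mapIdx, List.getElem_map, windowVec]
      rw [if_pos (by omega)]
    rw [smulIdx_append, smulIdx_append, hsmulB, smulIdx_eq_self, smulIdx_eq_self]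
    all_goals intro k hk; exact if_neg (by omega)
  rw [hsmul, ofList_append, ofList_append, ofList_append, ofList_append]
  exact (windowCon G l).mul ((windowCon G l).refl _) ((windowCon G l).mul
    (ConGen.Rel.of _ _ (windowRel_ofList_map_smul g hB)) ((windowCon G l).refl _))

theorem windowCon_ofList_smulIdx {m : ℕ} {c : ℕ → G} (hc : c ∈ windowSpan l m) :
    ∀ u : List α, u.length = m → windowCon G l (ofList u) (ofList (smulIdx c u)) := by
  induction hc using Subgroup.closure_induction with
  | mem _ h =>
    obtain ⟨t, g, ht, rfl⟩ := h
    exact fun u hu => windowCon_ofList_smulIdx_windowVec g (hu ▸ ht)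
  | one => simpa using fun u _ => (windowCon G l).refl _
  | mul c d _ _ hc hd =>
    intro u hu
    rw [smulIdx_mul]
    exact (windowCon G l).trans (hd u hu) (hc _ (by simpa using hu))
  | inv c _ hc =>
    intro u hu
    have hu' := smulIdx_inv_smulIdx c⁻¹ u
    rw [inv_inv] at hu'
    simpa [hu'] using (windowCon G l).symm (hc (smulIdx c⁻¹ u) (by simpa using hu))

theorem windowCon_iff {a b : FreeMonoid α} :
    windowCon G l a b ↔ WindowEquiv G l a.toList b.toList := by
  refine ⟨fun h => windowCon_le_windowEquivCon h, fun ⟨c, hc, hb⟩ => ?_⟩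
  rw [← ofList_toList a, ← ofList_toList b, hb]
  exact windowCon_ofList_smulIdx hc _ rfl

end Group

section CommGroup

variable {G α : Type*} [CommGroup G] [MulAction G α] {l : ℕ}

variable (l) in
/-- Divides out `c 0`, the coefficient of the first window, and shifts left. -/
def windowTail : (ℕ → G) →* (ℕ → G) :=
  MonoidHom.mk' (fun c k => if k + 1 < l then c (k + 1) * (c 0)⁻¹ else c (k + 1)) fun c d => by
    funext k
    simp only [Pi.mul_apply]
    split_ifs
    · rw [mul_inv, mul_mul_mul_comm]
    · rfl

variable (l) in
/-- Divides out `c m`, the coefficient of the last window `[m + 1 - l, m + 1)`, and truncates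
to `[0, m)`. -/
def windowDropLast (m : ℕ) : (ℕ → G) →* (ℕ → G) :=
  MonoidHom.mk' (fun c k => if k < m then (if m < k + l then c k * (c m)⁻¹ else c k) else 1)
    fun c d => by
      funext k
      simp only [Pi.mul_apply]
      split_ifs
      · rw [mul_inv, mul_mul_mul_comm]
      · rfl
      · rw [one_mul]

theorem windowTail_mem_windowSpan {m : ℕ} {c : ℕ → G} (hc : c ∈ windowSpan l (m + 1)) :
    windowTail l c ∈ windowSpan l m := by
  refine map_mem_windowSpan _ (fun t g ht => ?_) hc
  rcases t with _ | t
  · have : windowTail l (windowVec l 0 g) = 1 := by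
      funext k
      simp only [windowTail, windowVec, MonoidHom.mk'_apply]
      split_ifs <;> first | omega | simp
    exact this ▸ one_mem _
  · have : windowTail l (windowVec l (t + 1) g) = windowVec l t g := by
      funext k
      simp only [windowTail, windowVec, MonoidHom.mk'_apply]
      split_ifs <;> first | omega | simp
    exact this ▸ windowVec_mem_windowSpan g (by omega)

theorem windowDropLast_mem_windowSpan {m : ℕ} {c : ℕ → G} (hc : c ∈ windowSpan l (m + 1)) :
    windowDropLast l m c ∈ windowSpan l m := by
  refine map_mem_windowSpan _ (fun t g ht => ?_) hc
  rcases Nat.lt_or_ge m (t + l) with hlast | hinner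
  · have : windowDropLast l m (windowVec l t g) = 1 := by
      funext k
      simp only [windowDropLast, windowVec, MonoidHom.mk'_apply]
      split_ifs <;> first | omega | simp
    exact this ▸ one_mem _
  · have : windowDropLast l m (windowVec l t g) = windowVec l t g := by
      funext k
      simp only [windowDropLast, windowVec, MonoidHom.mk'_apply]
      split_ifs <;> first | omega | simp
    rw [this]
    exact windowVec_mem_windowSpan g hinner

variable (hfree : ∀ (g : G) (x : α), g • x = x → g = 1)
include hfree

namespace WindowEquiv

variable {u v : List α} {x : α}

theorem of_cons_cons (h : WindowEquiv G l (x :: u) (x :: v)) : WindowEquiv G l u v := by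
  obtain ⟨c, hc, hv⟩ := h
  rw [smulIdx_cons] at hv
  obtain ⟨hx, rfl⟩ := List.cons.inj hv
  have hc0 : c 0 = 1 := hfree _ _ hx.symm
  refine ⟨windowTail l c, windowTail_mem_windowSpan hc, smulIdx_congr fun k _ => ?_⟩
  simp [windowTail, hc0]

theorem of_append_singleton (h : WindowEquiv G l (u ++ [x]) (v ++ [x])) :
    WindowEquiv G l u v := by
  obtain ⟨c, hc, hv⟩ := h
  rw [smulIdx_concat] at hv
  obtain ⟨rfl, hx⟩ := List.append_inj' hv rfl
  have hcm : c u.length = 1 := hfree _ _ (List.singleton_inj.1 hx).symm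
  refine ⟨windowDropLast l u.length c, windowDropLast_mem_windowSpan (by simpa using hc),
    smulIdx_congr fun k hk => ?_⟩
  simp [windowDropLast, hk, hcm]

theorem of_append_left (a : List α) (h : WindowEquiv G l (a ++ u) (a ++ v)) :
    WindowEquiv G l u v := by
  induction a with
  | nil => exact h
  | cons x a ih => exact ih (of_cons_cons hfree h)

theorem of_append_right (a : List α) (h : WindowEquiv G l (u ++ a) (v ++ a)) :
    WindowEquiv G l u v := by
  induction a generalizing u v with
  | nil => simpa using h
  | cons x a ih =>
    rw [← List.singleton_append, ← List.append_assoc, ← List.append_assoc] at h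
    exact of_append_singleton hfree (ih h)

end WindowEquiv

theorem isCancelMul_windowCon_quotient : IsCancelMul (windowCon G l (α := α)).Quotient :=
  Con.isCancelMul_quotient _
    (fun a _ _ h => windowCon_iff.2 ((windowCon_iff.1 h).of_append_left hfree a.toList))
    (fun a _ _ h => windowCon_iff.2 ((windowCon_iff.1 h).of_append_right hfree a.toList))

end CommGroup

theorem permRel_eq_windowRel (n l : ℕ) (H : Subgroup (Equiv.Perm (Fin n))) :
    permRel n l H = windowRel H l := by
  ext a b
  exact ⟨fun ⟨σ, hσ, w, h⟩ => ⟨⟨σ, hσ⟩, w, h⟩, fun ⟨σ, w, h⟩ => ⟨σ, σ.2, w, h⟩⟩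

theorem permCon_eq_windowCon (n l : ℕ) (H : Subgroup (Equiv.Perm (Fin n))) :
    permCon n l H = windowCon H l := by
  rw [permCon, windowCon, permRel_eq_windowRel]

theorem cancellative_of_semiregular_abelian_general (n l : ℕ) (H : Subgroup (Equiv.Perm (Fin n)))
    (hsr : ∀ i : Fin n, ∀ σ ∈ H, σ i = i → σ = 1)
    (hab : ∀ σ ∈ H, ∀ τ ∈ H, σ * τ = τ * σ) :
    IsCancelMul (SM n l H) := by
  let _ : CommGroup H := { mul_comm := fun σ τ => Subtype.ext (hab σ σ.2 τ τ.2) }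
  show IsCancelMul (permCon n l H).Quotient
  rw [permCon_eq_windowCon]
  exact isCancelMul_windowCon_quotient fun σ i hσ => Subtype.ext (hsr i σ σ.2 hσ)

theorem cancellative_of_semiregular_abelian (n l : ℕ) (hl : 2 ≤ l) (H : Subgroup (Equiv.Perm (Fin n)))
    (hsr : ∀ i : Fin n, ∀ σ ∈ H, σ i = i → σ = 1)
    (hab : ∀ σ ∈ H, ∀ τ ∈ H, σ * τ = τ * σ) :
    IsCancelMul (SM n l H) :=
  cancellative_of_semiregular_abelian_general n l H hsr hab
end

section
/- If the monoid S_{n,l}(H) is cancellative, then H is semi-regular. -/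
/-!
If `σ ∈ H` fixes `i`, the defining relation for the word `x_i^{l-1} x_j` reads
`x_i^{l-1} x_j = x_i^{l-1} x_{σ j}`, so left cancellation gives `x_j = x_{σ j}`. But the defining
relations only rewrite words of length `l ≥ 2` into words of the same length, so distinct
generators stay distinct in `S_{n,l}(H)`; hence `σ j = j` for every `j`.
-/

def FreeMonoid.shortRigidCon (α : Type*) (l : ℕ) : Con (FreeMonoid α) where
  r a b := a.length = b.length ∧ (a.length < l → a = b)
  iseqv :=
    { refl _ := ⟨rfl, fun _ => rfl⟩
      symm h := ⟨h.1.symm, fun hlt => (h.2 (h.1 ▸ hlt)).symm⟩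
      trans h₁ h₂ := ⟨h₁.1.trans h₂.1, fun hlt => (h₁.2 hlt).trans (h₂.2 (h₁.1 ▸ hlt))⟩ }
  mul' := by
    rintro a b c d ⟨hab, hab'⟩ ⟨hcd, hcd'⟩
    refine ⟨by simp only [FreeMonoid.length_mul, hab, hcd], fun hlt => ?_⟩
    rw [FreeMonoid.length_mul] at hlt
    rw [hab' (by omega), hcd' (by omega)]

section

variable {n l : ℕ} {H : Subgroup (Equiv.Perm (Fin n))}

theorem permCon_le_shortRigidCon : permCon n l H ≤ FreeMonoid.shortRigidCon (Fin n) l := by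
  refine Con.conGen_le.2 ?_
  rintro _ _ ⟨σ, -, w, rfl, rfl⟩
  simp [FreeMonoid.shortRigidCon, FreeMonoid.length]

theorem xg_injective (hl : 1 < l) : Function.Injective (xg n l H) := fun i j hij => by
  have hrel := permCon_le_shortRigidCon ((Con.eq _).1 hij)
  exact FreeMonoid.of_injective (hrel.2 (by rwa [FreeMonoid.length_of]))

theorem permCon_mk'_eq_lift : (permCon n l H).mk' = FreeMonoid.lift (xg n l H) :=
  FreeMonoid.hom_eq fun _ => rfl

theorem prod_ofFn_xg_perm {σ : Equiv.Perm (Fin n)} (hσ : σ ∈ H) (w : Fin l → Fin n) :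
    (List.ofFn fun k => xg n l H (w k)).prod = (List.ofFn fun k => xg n l H (σ (w k))).prod := by
  have hrel : (permCon n l H).mk' _ = (permCon n l H).mk' _ :=
    (Con.eq _).2 (ConGen.Rel.of _ _ ⟨σ, hσ, w, rfl, rfl⟩)
  rw [permCon_mk'_eq_lift, FreeMonoid.lift_ofList, FreeMonoid.lift_ofList] at hrel
  simpa only [List.map_ofFn, Function.comp_def] using hrel

theorem xg_pow_mul_xg_perm {σ : Equiv.Perm (Fin n)} (hσ : σ ∈ H) {i : Fin n} (hi : σ i = i)
    (j : Fin n) :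
    xg n (l + 1) H i ^ l * xg n (l + 1) H j = xg n (l + 1) H i ^ l * xg n (l + 1) H (σ j) := by
  have h := prod_ofFn_xg_perm (l := l + 1) hσ (Fin.snoc (fun _ => i) j)
  rw [List.ofFn_succ', List.ofFn_succ'] at h
  simpa only [Fin.snoc_castSucc, Fin.snoc_last, hi, List.ofFn_const, List.concat_eq_append,
    List.prod_append, List.prod_singleton, List.prod_replicate] using h

end

theorem semiregular_of_cancellative (n l : ℕ) (hl : 2 ≤ l) (H : Subgroup (Equiv.Perm (Fin n)))
    (hc : IsCancelMul (SM n l H)) :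
    ∀ i : Fin n, ∀ σ ∈ H, σ i = i → σ = 1 := by
  intro i σ hσ hi
  obtain ⟨m, rfl⟩ : ∃ m, l = m + 1 := ⟨l - 1, by omega⟩
  exact Equiv.Perm.ext fun j => (xg_injective hl (hc.mul_left_cancel _ (xg_pow_mul_xg_perm hσ hi j))).symm
end

section
/- If the monoid S_{n,l}(H) is cancellative, then H is abelian. -/
/-! Rewrite `x_j^(l+1)` in two ways: with `τ` on the last `l` letters and then `σ` on the first `l`,
or with `σ` first and then `τ`. This gives
`x_{σj} x_{στj}^(l-1) x_{τj} = x_{σj} x_{τσj}^(l-1) x_{τj}`, so cancellation yields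
`x_{στj}^(l-1) = x_{τσj}^(l-1)`. Every defining relation has length `l`, so a word shorter than `l`
is congruent only to itself, whence `στj = τσj`. -/

open FreeMonoid

def lengthCon (α : Type*) (l : ℕ) : Con (FreeMonoid α) where
  r a b := a.length = b.length ∧ (a.length < l → a = b)
  iseqv :=
    ⟨fun _ => ⟨rfl, fun _ => rfl⟩,
     fun h => ⟨h.1.symm, fun hl => (h.2 (h.1 ▸ hl)).symm⟩,
     fun h₁ h₂ => ⟨h₁.1.trans h₂.1, fun hl => (h₁.2 hl).trans (h₂.2 (h₁.1 ▸ hl))⟩⟩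
  mul' h₁ h₂ := by
    refine ⟨by simp only [length_mul, h₁.1, h₂.1], fun hl => ?_⟩
    rw [length_mul] at hl
    rw [h₁.2 (by omega), h₂.2 (by omega)]

section

variable {n l : ℕ} {H : Subgroup (Equiv.Perm (Fin n))}

theorem permCon_le_lengthCon : permCon n l H ≤ lengthCon (Fin n) l :=
  Con.conGen_le.mpr fun _ _ ⟨_, _, _, ha, hb⟩ => by
    subst ha hb
    exact ⟨by simp [length], by simp [length]⟩

theorem eq_of_permCon_of_length_lt {a b : FreeMonoid (Fin n)} (h : permCon n l H a b)
    (ha : a.length < l) : a = b :=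
  (permCon_le_lengthCon h).2 ha

theorem mk'_ofList_eq_prod (w : List (Fin n)) :
    (permCon n l H).mk' (ofList w) = (w.map (xg n l H)).prod := by
  induction w with
  | nil => rfl
  | cons a w ih => rw [ofList_cons, map_mul, ih, List.map_cons, List.prod_cons]; rfl

theorem xg_pow_eq_mk'_replicate (a : Fin n) (k : ℕ) :
    xg n l H a ^ k = (permCon n l H).mk' (ofList (List.replicate k a)) := by
  rw [mk'_ofList_eq_prod, List.map_replicate, List.prod_replicate]

theorem prod_map_xg_eq_of_mem {π : Equiv.Perm (Fin n)} (hπ : π ∈ H) {w : List (Fin n)}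
    (hw : w.length = l) : (w.map (xg n l H)).prod = ((w.map π).map (xg n l H)).prod := by
  subst hw
  rw [← mk'_ofList_eq_prod, ← mk'_ofList_eq_prod]
  exact (Con.eq _).mpr <| ConGen.Rel.of _ _ ⟨π, hπ, fun i => w[i], by simp, by simp⟩

theorem xg_pow_injective {k : ℕ} (hk : 0 < k) (hkl : k < l) {a b : Fin n}
    (h : xg n l H a ^ k = xg n l H b ^ k) : a = b := by
  rw [xg_pow_eq_mk'_replicate, xg_pow_eq_mk'_replicate] at h
  have hw := eq_of_permCon_of_length_lt ((Con.eq _).mp h) (by simpa [length] using hkl)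
  exact (List.replicate_inj.mp (ofList.injective hw)).2.resolve_left hk.ne'

end

section

variable {n m : ℕ} {H : Subgroup (Equiv.Perm (Fin n))} {π : Equiv.Perm (Fin n)}

theorem xg_mul_xg_pow_of_mem (hπ : π ∈ H) (a b : Fin n) :
    xg n (m + 1) H a * xg n (m + 1) H b ^ m =
      xg n (m + 1) H (π a) * xg n (m + 1) H (π b) ^ m := by
  simpa [List.map_replicate, List.prod_replicate] using
    prod_map_xg_eq_of_mem hπ (w := a :: List.replicate m b) (by simp)

theorem xg_pow_mul_xg_of_mem (hπ : π ∈ H) (a b : Fin n) :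
    xg n (m + 1) H a ^ m * xg n (m + 1) H b =
      xg n (m + 1) H (π a) ^ m * xg n (m + 1) H (π b) := by
  simpa [List.map_replicate, List.prod_replicate] using
    prod_map_xg_eq_of_mem hπ (w := List.replicate m a ++ [b]) (by simp)

end

theorem abelian_of_cancellative (n l : ℕ) (hl : 2 ≤ l) (H : Subgroup (Equiv.Perm (Fin n)))
    (hc : IsCancelMul (SM n l H)) :
    ∀ σ ∈ H, ∀ τ ∈ H, σ * τ = τ * σ := by
  obtain ⟨m, rfl⟩ : ∃ m, l = m + 1 := ⟨l - 1, by omega⟩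
  intro σ hσ τ hτ
  ext j
  set x := xg n (m + 1) H
  have key : x (σ j) * x (σ (τ j)) ^ m * x (τ j) = x (σ j) * x (τ (σ j)) ^ m * x (τ j) :=
    calc x (σ j) * x (σ (τ j)) ^ m * x (τ j)
        = x j * (x (τ j) ^ m * x (τ j)) := by rw [← xg_mul_xg_pow_of_mem hσ, mul_assoc]
      _ = x j * x j ^ m * x j := by rw [← xg_pow_mul_xg_of_mem hτ, mul_assoc]
      _ = x (σ j) * (x (σ j) ^ m * x j) := by rw [xg_mul_xg_pow_of_mem hσ, mul_assoc]
      _ = x (σ j) * x (τ (σ j)) ^ m * x (τ j) := by rw [xg_pow_mul_xg_of_mem hτ, mul_assoc]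
  exact congrArg Fin.val <|
    xg_pow_injective (by omega) (by omega) (mul_left_cancel (mul_right_cancel key))
end

section
/- The monoid S_{n,l}(H) is cancellative if and only if H is semi-regular and abelian. -/
/-!
If `H` is abelian, call a list `(h₁, …, hₘ)` of elements of `H` balanced when its products over the
residue classes of positions modulo `l` all coincide. Acting letterwise with a balanced list is a
congruence on words containing the defining relations (a relation is the constant list `σ^l`), and
conversely every balanced list is a product of such windows `h^l` placed along the word. So the two
congruences agree. If moreover `H` acts freely, the coefficients on a common prefix or suffix of two
related words must be `1`, which gives cancellation.

Conversely, words of length `< l` are alone in their class. In a cancellative `S_{n,l}(H)`,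
cancelling `x_i^{l-1}` in `x_i^{l-1} x_j = x_{σ i}^{l-1} x_{σ j}` shows that `σ` fixing `i` is
trivial, and rewriting `x_i^{l+1}` in two ways gives `x_{τ σ i}^{l-1} = x_{σ τ i}^{l-1}`, so
`σ τ = τ σ`.
-/

namespace PermMonoid

section Residue

variable {G : Type*} [CommGroup G] {l : ℕ}

/-- The product of the entries of a list in the positions (counted from `0`) congruent to `r`
modulo `l`. -/
def resProd : ZMod l → List G → G
  | _, [] => 1
  | r, a :: f => (if r = 0 then a else 1) * resProd (r - 1) f

@[simp] lemma resProd_nil (r : ZMod l) : resProd r ([] : List G) = 1 := rfl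

lemma resProd_cons (r : ZMod l) (a : G) (f : List G) :
    resProd r (a :: f) = (if r = 0 then a else 1) * resProd (r - 1) f := rfl

lemma resProd_append (f g : List G) (r : ZMod l) :
    resProd r (f ++ g) = resProd r f * resProd (r - (f.length : ZMod l)) g := by
  induction f generalizing r with
  | nil => simp
  | cons a f ih =>
    rw [List.cons_append, resProd_cons, resProd_cons, ih, mul_assoc, List.length_cons,
      Nat.cast_succ, sub_sub, add_comm (1 : ZMod l)]

@[simp] lemma resProd_replicate_one (k : ℕ) (r : ZMod l) :
    resProd r (List.replicate k (1 : G)) = 1 := by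
  induction k generalizing r with
  | zero => rfl
  | succ k ih => simp [List.replicate_succ, resProd_cons, ih]

lemma resProd_map {G' : Type*} [CommGroup G'] (φ : G →* G') (f : List G) (r : ZMod l) :
    resProd r (f.map φ) = φ (resProd r f) := by
  induction f generalizing r with
  | nil => simp
  | cons a f ih =>
    rw [List.map_cons, resProd_cons, resProd_cons, ih, map_mul, apply_ite φ, map_one]

lemma resProd_zipWith_mul {f g : List G} (h : f.length = g.length) (r : ZMod l) :
    resProd r (List.zipWith (· * ·) f g) = resProd r f * resProd r g := by
  induction f generalizing g r with
  | nil => simp [List.length_eq_zero_iff.1 h.symm]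
  | cons a f ih =>
    obtain ⟨b, g, rfl⟩ := List.exists_cons_of_length_eq_add_one h.symm
    rw [List.zipWith_cons_cons, resProd_cons, resProd_cons, resProd_cons,
      ih (Nat.succ_injective h), mul_mul_mul_comm]
    split_ifs <;> simp

lemma resProd_natCast_of_length_le {f : List G} (hf : f.length ≤ l) {k : ℕ}
    (hk : k < l) : resProd (k : ZMod l) f = f.getD k 1 := by
  induction f generalizing k with
  | nil => simp
  | cons a f ih =>
    rw [List.length_cons] at hf
    rw [resProd_cons]
    cases k with
    | zero =>
      have hlast : ((0 : ℕ) : ZMod l) - 1 = ((l - 1 : ℕ) : ZMod l) := by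
        rw [Nat.cast_sub (by omega : 1 ≤ l), ZMod.natCast_self, Nat.cast_zero, Nat.cast_one,
          zero_sub]
      rw [hlast, ih (by omega) (by omega), List.getD_eq_default _ _ (by omega)]
      simp
    | succ k =>
      have hne : ((k + 1 : ℕ) : ZMod l) ≠ 0 := by
        rw [Ne, ZMod.natCast_eq_zero_iff]
        exact Nat.not_dvd_of_pos_of_lt k.succ_pos hk
      rw [if_neg hne, one_mul, Nat.cast_succ, add_sub_cancel_right, ih (by omega) (by omega)]
      simp

lemma resProd_replicate_self [NeZero l] (g : G) (r : ZMod l) :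
    resProd r (List.replicate l g) = g := by
  rw [← ZMod.natCast_zmod_val r, resProd_natCast_of_length_le (by simp) (ZMod.val_lt r)]
  simp [ZMod.val_lt r]

def Balanced (l : ℕ) (f : List G) : Prop :=
  ∃ c, ∀ r : ZMod l, resProd r f = c

lemma balanced_replicate_one (k : ℕ) : Balanced l (List.replicate k (1 : G)) :=
  ⟨1, resProd_replicate_one k⟩

lemma balanced_window [NeZero l] (g : G) (k : ℕ) :
    Balanced l (List.replicate l g ++ List.replicate k 1) :=
  ⟨g, fun r => by rw [resProd_append, resProd_replicate_self, resProd_replicate_one, mul_one]⟩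

namespace Balanced

variable {f g : List G}

lemma map_inv (hf : Balanced l f) : Balanced l (f.map (·⁻¹)) := by
  obtain ⟨c, hc⟩ := hf
  exact ⟨c⁻¹, fun r => by rw [← hc r]; exact resProd_map (invMonoidHom : G →* G) f r⟩

lemma zipWith_mul (hf : Balanced l f) (hg : Balanced l g) (h : f.length = g.length) :
    Balanced l (List.zipWith (· * ·) f g) := by
  obtain ⟨c, hc⟩ := hf
  obtain ⟨d, hd⟩ := hg
  exact ⟨c * d, fun r => by rw [resProd_zipWith_mul h, hc, hd]⟩

lemma zipWith_div (hf : Balanced l f) (hg : Balanced l g) (h : f.length = g.length) :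
    Balanced l (List.zipWith (· / ·) f g) := by
  have := hf.zipWith_mul hg.map_inv (by simpa using h)
  simpa only [List.zipWith_map_right, div_eq_mul_inv] using this

lemma append (hf : Balanced l f) (hg : Balanced l g) : Balanced l (f ++ g) := by
  obtain ⟨c, hc⟩ := hf
  obtain ⟨d, hd⟩ := hg
  exact ⟨c * d, fun r => by rw [resProd_append, hc, hd]⟩

lemma of_cons_one (hf : Balanced l (1 :: f)) : Balanced l f := by
  obtain ⟨c, hc⟩ := hf
  exact ⟨c, fun r => by simpa [resProd_cons] using hc (r + 1)⟩

lemma of_append_one (hf : Balanced l (f ++ [1])) : Balanced l f := by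
  obtain ⟨c, hc⟩ := hf
  exact ⟨c, fun r => by simpa [resProd_append, resProd_cons] using hc r⟩

-- Some residue class is empty, so the common value of the residue products is `1`.
lemma eq_replicate_one (hf : Balanced l f) (hlt : f.length < l) :
    f = List.replicate f.length 1 := by
  obtain ⟨c, hc⟩ := hf
  have hc1 : c = 1 := by
    rw [← hc f.length, resProd_natCast_of_length_le hlt.le hlt, List.getD_eq_default _ _ le_rfl]
  refine List.ext_getElem (by simp) fun i hi _ => ?_
  rw [List.getElem_replicate, ← hc1, ← hc i, resProd_natCast_of_length_le hlt.le (by omega),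
    List.getD_eq_getElem]

end Balanced

end Residue

section Act

variable {G α : Type*} [CommGroup G] [MulAction G α] {l : ℕ}

def act (f : List G) (u : List α) : List α :=
  List.zipWith (· • ·) f u

@[simp] lemma act_cons (g : G) (f : List G) (a : α) (u : List α) :
    act (g :: f) (a :: u) = g • a :: act f u := rfl

@[simp] lemma act_nil_right (f : List G) : act f ([] : List α) = [] := List.zipWith_nil_right

@[simp] lemma length_act (f : List G) (u : List α) :
    (act f u).length = min f.length u.length := List.length_zipWith

lemma act_append {f f' : List G} {u u' : List α} (h : f.length = u.length) :
    act (f ++ f') (u ++ u') = act f u ++ act f' u' :=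
  List.zipWith_append h

lemma act_replicate (g : G) (k : ℕ) (u : List α) :
    act (List.replicate k g) u = (u.take k).map (g • ·) := by
  induction u generalizing k with
  | nil => simp
  | cons a u ih =>
    cases k with
    | zero => rfl
    | succ k => simp [List.replicate_succ, ih]

lemma act_replicate_one (u : List α) : act (List.replicate u.length (1 : G)) u = u := by
  simp [act_replicate]

lemma act_window (g : G) {k : ℕ} {u : List α} (hu : u.length = l + k) :
    act (List.replicate l g ++ List.replicate k 1) u = (u.take l).map (g • ·) ++ u.drop l := by
  conv_lhs => rw [← List.take_append_drop l u]
  have hdrop : (u.drop l).length = k := by simp [hu]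
  rw [act_append (by simp [hu]), act_replicate, List.take_take, min_self, ← hdrop,
    act_replicate_one]

lemma act_act (f g : List G) (u : List α) :
    act f (act g u) = act (List.zipWith (· * ·) f g) u := by
  induction f generalizing g u with
  | nil => rfl
  | cons a f ih =>
    cases g with
    | nil => rfl
    | cons b g =>
      cases u with
      | nil => rfl
      | cons x u => simp [ih, mul_smul]

lemma act_zipWith_div_act {f g : List G} (h : f.length = g.length) (u : List α) :
    act (List.zipWith (· / ·) f g) (act g u) = act f u := by
  refine List.ext_getElem (by simp [h]) fun i _ _ => ?_
  simp [act, smul_smul]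

def BalancedRel (G : Type*) [CommGroup G] [MulAction G α] (l : ℕ) (u v : List α) : Prop :=
  ∃ f : List G, f.length = u.length ∧ Balanced l f ∧ v = act f u

namespace BalancedRel

variable {u v w u' v' : List α} {a : α}

lemma refl (u : List α) : BalancedRel G l u u :=
  ⟨List.replicate u.length 1, List.length_replicate, balanced_replicate_one _,
    (act_replicate_one u).symm⟩

lemma symm (h : BalancedRel G l u v) : BalancedRel G l v u := by
  obtain ⟨f, hf, hbal, rfl⟩ := h
  refine ⟨f.map (·⁻¹), by simp [hf], hbal.map_inv, ?_⟩
  rw [act_act, List.zipWith_map_left, List.zipWith_self]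
  simp only [inv_mul_cancel, List.map_const', hf, act_replicate_one]

lemma trans (h : BalancedRel G l u v) (h' : BalancedRel G l v w) : BalancedRel G l u w := by
  obtain ⟨f, hf, hbal, rfl⟩ := h
  obtain ⟨f', hf', hbal', rfl⟩ := h'
  have hlen : f'.length = f.length := by simp [hf', hf]
  exact ⟨List.zipWith (· * ·) f' f, by simp [hlen, hf], hbal'.zipWith_mul hbal hlen,
    act_act f' f u⟩

lemma append (h : BalancedRel G l u v) (h' : BalancedRel G l u' v') :
    BalancedRel G l (u ++ u') (v ++ v') := by
  obtain ⟨f, hf, hbal, rfl⟩ := h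
  obtain ⟨f', hf', hbal', rfl⟩ := h'
  exact ⟨f ++ f', by simp [hf, hf'], hbal.append hbal', (act_append hf).symm⟩

lemma of_cons (hfree : ∀ (g : G) (x : α), g • x = x → g = 1)
    (h : BalancedRel G l (a :: u) (a :: v)) : BalancedRel G l u v := by
  obtain ⟨f, hf, hbal, hv⟩ := h
  obtain ⟨g, f, rfl⟩ := List.exists_cons_of_length_eq_add_one hf
  rw [act_cons, List.cons.injEq] at hv
  obtain rfl := hfree g a hv.1.symm
  exact ⟨f, Nat.succ_injective hf, hbal.of_cons_one, hv.2⟩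

lemma of_append_singleton (hfree : ∀ (g : G) (x : α), g • x = x → g = 1)
    (h : BalancedRel G l (u ++ [a]) (v ++ [a])) : BalancedRel G l u v := by
  obtain ⟨f, hf, hbal, hv⟩ := h
  rw [List.length_append, List.length_singleton] at hf
  obtain ⟨f, g, rfl⟩ : ∃ f' g, f = f' ++ [g] :=
    ⟨f.dropLast, f.getLast (List.ne_nil_of_length_eq_add_one hf),
      (List.dropLast_append_getLast _).symm⟩
  have hf' : f.length = u.length := by simpa using hf
  rw [act_append hf', act_cons, act_nil_right] at hv
  obtain ⟨hvu, hga⟩ := List.append_inj' hv rfl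
  obtain rfl := hfree g a (List.singleton_inj.1 hga).symm
  exact ⟨f, hf', hbal.of_append_one, hvu⟩

lemma of_append_left (hfree : ∀ (g : G) (x : α), g • x = x → g = 1) (p : List α)
    (h : BalancedRel G l (p ++ u) (p ++ v)) : BalancedRel G l u v := by
  induction p with
  | nil => exact h
  | cons a p ih => exact ih (h.of_cons hfree)

lemma of_append_right (hfree : ∀ (g : G) (x : α), g • x = x → g = 1) (p : List α)
    (h : BalancedRel G l (u ++ p) (v ++ p)) : BalancedRel G l u v := by
  induction p using List.reverseRecOn generalizing u v with
  | nil => simpa using h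
  | append_singleton p a ih =>
    rw [← List.append_assoc, ← List.append_assoc] at h
    exact ih (h.of_append_singleton hfree)

end BalancedRel

def balancedCon (G : Type*) [CommGroup G] [MulAction G α] (l : ℕ) : Con (FreeMonoid α) where
  r a b := BalancedRel G l a.toList b.toList
  iseqv := ⟨fun a => .refl a.toList, .symm, .trans⟩
  mul' h h' := h.append h'

lemma balancedCon_cancel_left (hfree : ∀ (g : G) (x : α), g • x = x → g = 1)
    {a b c : FreeMonoid α} (h : balancedCon G l (a * b) (a * c)) : balancedCon G l b c :=
  BalancedRel.of_append_left hfree a.toList h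

lemma balancedCon_cancel_right (hfree : ∀ (g : G) (x : α), g • x = x → g = 1)
    {a b c : FreeMonoid α} (h : balancedCon G l (b * a) (c * a)) : balancedCon G l b c :=
  BalancedRel.of_append_right hfree a.toList h

end Act

section PermCon

variable {n l : ℕ} {H : Subgroup (Equiv.Perm (Fin n))}

lemma permCon_ofList_append_map {σ : Equiv.Perm (Fin n)} (hσ : σ ∈ H) {x : List (Fin n)}
    (hx : x.length = l) (y : List (Fin n)) :
    permCon n l H (.ofList (x ++ y)) (.ofList (x.map σ ++ y)) := by
  subst hx
  refine (permCon n _ H).mul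
    (ConGen.Rel.of _ _ ⟨σ, hσ, fun i : Fin x.length => x[(i : ℕ)], ?_, ?_⟩)
    ((permCon n _ H).refl _)
  · exact List.ofFn_getElem.symm
  · exact (List.ofFn_getElem_eq_map x σ).symm

variable {G : Type*} [CommGroup G] [MulAction G (Fin n)]

lemma permCon_le_balancedCon [NeZero l] (hH : ∀ σ ∈ H, ∃ g : G, MulAction.toPerm g = σ) :
    permCon n l H ≤ balancedCon G l := by
  refine Con.conGen_le.2 fun a b ⟨σ, hσ, w, ha, hb⟩ => ?_
  obtain ⟨g, rfl⟩ := hH σ hσ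
  refine ⟨List.replicate l g, by simp [ha], ⟨g, resProd_replicate_self g⟩, ?_⟩
  rw [ha, hb, FreeMonoid.toList_ofList, FreeMonoid.toList_ofList, act_replicate,
    List.take_of_length_le (by simp), List.map_ofFn]
  rfl

lemma permCon_ofList_window (hG : ∀ g : G, MulAction.toPerm g ∈ H) (g : G) {k : ℕ}
    {u : List (Fin n)} (hu : u.length = l + k) :
    permCon n l H (.ofList u) (.ofList (act (List.replicate l g ++ List.replicate k 1) u)) := by
  rw [act_window g hu]
  conv_lhs => rw [← List.take_append_drop l u]
  exact permCon_ofList_append_map (hG g) (by simp; omega) _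

lemma permCon_ofList_act [NeZero l] (hG : ∀ g : G, MulAction.toPerm g ∈ H) {u : List (Fin n)}
    {f : List G} (hf : f.length = u.length) (hbal : Balanced l f) :
    permCon n l H (.ofList u) (.ofList (act f u)) := by
  induction hm : u.length generalizing u f with
  | zero =>
    rw [List.length_eq_zero_iff.1 hm, act_nil_right]
    exact (permCon n l H).refl _
  | succ m ih =>
    have hl : 0 < l := NeZero.pos l
    rcases lt_or_ge (m + 1) l with hlt | hle
    · rw [hbal.eq_replicate_one (by omega), hf, act_replicate_one]
      exact (permCon n l H).refl _
    obtain ⟨a, u, rfl⟩ := List.exists_cons_of_length_eq_add_one hm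
    obtain ⟨g, f, rfl⟩ := List.exists_cons_of_length_eq_add_one (hf.trans hm)
    rw [List.length_cons, Nat.add_right_cancel_iff] at hm
    rw [List.length_cons, List.length_cons, Nat.add_right_cancel_iff] at hf
    -- A window move `g ^ l` at the front absorbs the first coefficient; the remaining
    -- coefficients form a balanced list on the tail.
    set w : List G := List.replicate (l - 1) g ++ List.replicate (m + 1 - l) 1
    have hw : g :: w = List.replicate l g ++ List.replicate (m + 1 - l) 1 := by
      rw [← List.cons_append, ← List.replicate_succ, Nat.sub_add_cancel hl]
    have hwlen : w.length = m := by simp [w]; omega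
    have hwindow :=
      permCon_ofList_window (l := l) hG g (k := m + 1 - l) (u := a :: u) (by simp; omega)
    rw [← hw, act_cons] at hwindow
    have hbal' : Balanced l (List.zipWith (· / ·) f w) := by
      have := hbal.zipWith_div (hw ▸ balanced_window g (m + 1 - l)) (by simp [hf, hm, hwlen])
      rw [List.zipWith_cons_cons, div_self'] at this
      exact this.of_cons_one
    have htail := ih (u := act w u) (by simp [hf, hwlen, hm]) hbal' (by simp [hwlen, hm])
    rw [act_zipWith_div_act (by rw [hf, hm, hwlen])] at htail
    refine (permCon n l H).trans hwindow ?_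
    rw [act_cons, FreeMonoid.ofList_cons, FreeMonoid.ofList_cons]
    exact (permCon n l H).mul ((permCon n l H).refl _) htail

lemma balancedCon_le_permCon [NeZero l] (hG : ∀ g : G, MulAction.toPerm g ∈ H) :
    balancedCon G l ≤ permCon n l H := fun a b ⟨f, hf, hbal, hb⟩ => by
  simpa [← hb] using permCon_ofList_act hG hf hbal

lemma eq_of_permCon_of_length_lt {a b : FreeMonoid (Fin n)} (h : permCon n l H a b)
    (hlt : a.length < l) : a = b := by
  have key : a.length = b.length ∧ (a.length < l → a = b) := by
    clear hlt
    induction h with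
    | of a b hab =>
      obtain ⟨σ, -, w, rfl, rfl⟩ := hab
      exact ⟨by simp [FreeMonoid.length], fun h => absurd h (by simp [FreeMonoid.length])⟩
    | refl a => exact ⟨rfl, fun _ => rfl⟩
    | symm _ ih => exact ⟨ih.1.symm, fun h => (ih.2 (ih.1 ▸ h)).symm⟩
    | trans _ _ ih₁ ih₂ =>
      exact ⟨ih₁.1.trans ih₂.1, fun h => (ih₁.2 h).trans (ih₂.2 (ih₁.1 ▸ h))⟩
    | mul _ _ ih₁ ih₂ =>
      simp only [FreeMonoid.length_mul] at ih₁ ih₂ ⊢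
      exact ⟨by omega, fun h => by rw [ih₁.2 (by omega), ih₂.2 (by omega)]⟩
  exact key.2 hlt

end PermCon

lemma _root_.Con.isCancelMul_quotient_s8 {M : Type*} [Monoid M] (c : Con M)
    (hleft : ∀ {a b b'}, c (a * b) (a * b') → c b b')
    (hright : ∀ {a b b'}, c (b * a) (b' * a) → c b b') : IsCancelMul c.Quotient where
  mul_left_cancel a b b' h := by
    induction a using Con.induction_on
    induction b using Con.induction_on
    induction b' using Con.induction_on
    exact c.eq.2 (hleft (c.eq.1 h))
  mul_right_cancel a b b' h := by
    induction a using Con.induction_on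
    induction b using Con.induction_on
    induction b' using Con.induction_on
    exact c.eq.2 (hright (c.eq.1 h))

section Monoid

variable {n l : ℕ} {H : Subgroup (Equiv.Perm (Fin n))}

lemma mk'_ofList (u : List (Fin n)) :
    (permCon n l H).mk' (.ofList u) = (u.map (xg n l H)).prod := by
  induction u with
  | nil => exact map_one _
  | cons a u ih => rw [FreeMonoid.ofList_cons, map_mul, ih, List.map_cons, List.prod_cons]; rfl

lemma prod_map_xg_map {σ : Equiv.Perm (Fin n)} (hσ : σ ∈ H) {u : List (Fin n)}
    (hu : u.length = l) : ((u.map σ).map (xg n l H)).prod = (u.map (xg n l H)).prod := by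
  rw [← mk'_ofList, ← mk'_ofList, Con.coe_mk', eq_comm, Con.eq]
  simpa using permCon_ofList_append_map hσ hu []

lemma xg_pow_injective {k : ℕ} (hk : 0 < k) (hkl : k < l) {a b : Fin n}
    (h : xg n l H a ^ k = xg n l H b ^ k) : a = b := by
  rw [← List.prod_replicate, ← List.prod_replicate, ← List.map_replicate, ← List.map_replicate,
    ← mk'_ofList, ← mk'_ofList, Con.coe_mk', Con.eq] at h
  have := congrArg FreeMonoid.toList
    (eq_of_permCon_of_length_lt h (by simpa [FreeMonoid.length] using hkl))
  simp only [FreeMonoid.toList_ofList] at this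
  exact List.eq_of_mem_replicate (this ▸ List.mem_replicate.2 ⟨hk.ne', rfl⟩)

lemma xg_pow_mul_xg_eq (hl : 1 ≤ l) {σ : Equiv.Perm (Fin n)} (hσ : σ ∈ H) (a b : Fin n) :
    xg n l H a ^ (l - 1) * xg n l H b = xg n l H (σ a) ^ (l - 1) * xg n l H (σ b) := by
  simpa using (prod_map_xg_map hσ (u := List.replicate (l - 1) a ++ [b]) (by simp; omega)).symm

lemma xg_mul_xg_pow_eq (hl : 1 ≤ l) {σ : Equiv.Perm (Fin n)} (hσ : σ ∈ H) (a b : Fin n) :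
    xg n l H a * xg n l H b ^ (l - 1) = xg n l H (σ a) * xg n l H (σ b) ^ (l - 1) := by
  simpa using (prod_map_xg_map hσ (u := a :: List.replicate (l - 1) b) (by simp; omega)).symm

lemma xg_pow_eq {σ : Equiv.Perm (Fin n)} (hσ : σ ∈ H) (a : Fin n) :
    xg n l H a ^ l = xg n l H (σ a) ^ l := by
  simpa using (prod_map_xg_map hσ (u := List.replicate l a) (by simp)).symm

lemma eq_one_of_mem_of_apply_eq [IsCancelMul (SM n l H)] (hl : 2 ≤ l)
    {σ : Equiv.Perm (Fin n)} (hσ : σ ∈ H) {i : Fin n} (hi : σ i = i) : σ = 1 := by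
  refine Equiv.ext fun j => ?_
  have h := xg_pow_mul_xg_eq (l := l) (by omega) hσ i j
  rw [hi] at h
  simpa using (xg_pow_injective (k := 1) one_pos hl (by simpa using mul_left_cancel h)).symm

lemma mul_comm_of_mem [IsCancelMul (SM n l H)] (hl : 2 ≤ l) {σ τ : Equiv.Perm (Fin n)}
    (hσ : σ ∈ H) (hτ : τ ∈ H) : σ * τ = τ * σ := by
  refine Equiv.ext fun i => ?_
  set x := xg n l H
  -- Both sides equal `x i ^ (l + 1)`: apply `σ` to the first window and then `τ` to the last one,
  -- or the other way round.
  have h : x (σ i) * (x (τ (σ i)) ^ (l - 1) * x (τ i)) =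
      x (σ i) * (x (σ (τ i)) ^ (l - 1) * x (τ i)) :=
    calc x (σ i) * (x (τ (σ i)) ^ (l - 1) * x (τ i))
        = x (σ i) * (x (σ i) ^ (l - 1) * x i) := by rw [xg_pow_mul_xg_eq (by omega) hτ (σ i) i]
      _ = x (σ i) ^ l * x i := by rw [← mul_assoc, ← pow_succ', Nat.sub_add_cancel (by omega)]
      _ = x i ^ l * x i := by rw [← xg_pow_eq hσ]
      _ = x i * x i ^ l := pow_mul_comm' _ _
      _ = x i * x (τ i) ^ l := by rw [← xg_pow_eq hτ]
      _ = x i * x (τ i) ^ (l - 1) * x (τ i) := by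
        rw [mul_assoc, ← pow_succ, Nat.sub_add_cancel (by omega)]
      _ = x (σ i) * (x (σ (τ i)) ^ (l - 1) * x (τ i)) := by
        rw [xg_mul_xg_pow_eq (by omega) hσ, mul_assoc]
  have := xg_pow_injective (by omega) (by omega) (mul_right_cancel (mul_left_cancel h))
  simpa using this.symm

open scoped IsMulCommutative in
theorem isCancelMul_of_free [NeZero l] [IsMulCommutative H]
    (hfree : ∀ i : Fin n, ∀ σ ∈ H, σ i = i → σ = 1) : IsCancelMul (SM n l H) := by
  have hcon : permCon n l H = balancedCon H l :=
    le_antisymm (permCon_le_balancedCon fun σ hσ => ⟨⟨σ, hσ⟩, rfl⟩)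
      (balancedCon_le_permCon fun g => g.2)
  have hfree' : ∀ (g : H) (x : Fin n), g • x = x → g = 1 :=
    fun g x h => Subtype.ext (hfree x g g.2 h)
  change IsCancelMul (permCon n l H).Quotient
  rw [hcon]
  exact (balancedCon H l).isCancelMul_quotient_s8 (balancedCon_cancel_left hfree')
    (balancedCon_cancel_right hfree')

end Monoid

end PermMonoid

theorem cancellative_iff_semiregular_abelian (n l : ℕ) (hl : 2 ≤ l) (H : Subgroup (Equiv.Perm (Fin n))) :
    IsCancelMul (SM n l H) ↔
      ((∀ i : Fin n, ∀ σ ∈ H, σ i = i → σ = 1) ∧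
        (∀ σ ∈ H, ∀ τ ∈ H, σ * τ = τ * σ)) := by
  constructor
  · intro _
    exact ⟨fun _ _ hσ hi => PermMonoid.eq_one_of_mem_of_apply_eq hl hσ hi,
      fun _ hσ _ hτ => PermMonoid.mul_comm_of_mem hl hσ hτ⟩
  · rintro ⟨hfree, hcomm⟩
    have : NeZero l := ⟨by omega⟩
    have : IsMulCommutative H := isMulCommutative_iff.2 fun a b => Subtype.ext (hcomm _ a.2 _ b.2)
    exact PermMonoid.isCancelMul_of_free hfree
end

section
/- Let H be a transitive abelian subgroup of Sym_n and let G be the group of fractions of S_{n,l}(H). Then G is the semidirect product of its torsion subgroup T(G) with the infinite cyclic subgroup generated by x_1: G = T(G) ⋊ ⟨x_1⟩. -/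
/-- The relators for the universal group (= group of fractions) of `S_{n,l}(H)`. -/
def permRels (n l : ℕ) (H : Subgroup (Equiv.Perm (Fin n))) : Set (FreeGroup (Fin n)) :=
  { r | ∃ σ ∈ H, ∃ w : Fin l → Fin n,
      r = (List.ofFn fun i => FreeGroup.of (w i)).prod *
          ((List.ofFn fun i => FreeGroup.of (σ (w i))).prod)⁻¹ }

/-- The universal group (group of fractions) `G` of `S_{n,l}(H)`. -/
abbrev SG (n l : ℕ) (H : Subgroup (Equiv.Perm (Fin n))) := PresentedGroup (permRels n l H)

/-- The generator `x_i` of the group `G`. -/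
def Xg (n l : ℕ) (H : Subgroup (Equiv.Perm (Fin n))) (i : Fin n) : SG n l H :=
  PresentedGroup.of i

/-!
The degree map `x_i ↦ 1` from `G` onto `ℤ` is split by `k ↦ x_e^k`, so its kernel is a
normal complement of `⟨x_e⟩`, and it contains every element of finite order. Conversely, the
defining relations say that conjugating `x_b x_c⁻¹` by `x_c^k` is `H`-invariant for every
`k ∈ ℤ`. By transitivity of `H` this makes the conjugates `x_e^k (x_b x_e⁻¹) x_e^(-k)` commute
pairwise, and each has finite order because `σ ↦ x_{σe} x_e⁻¹` is a homomorphism from the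
finite group `H`. These conjugates generate a normal subgroup that, together with `x_e`,
generates `G`, so it is the whole kernel; being abelian and generated by torsion elements,
the kernel is torsion.
-/

theorem List.prod_ofFn_ite_eq {M : Type*} [Monoid M] {l d : ℕ} (hd : d < l) (B C : M) :
    (List.ofFn fun i : Fin l => if (i : ℕ) = d then B else C).prod =
      C ^ d * B * C ^ (l - 1 - d) := by
  have : (List.ofFn fun i : Fin l => if (i : ℕ) = d then B else C) =
      List.replicate d C ++ B :: List.replicate (l - 1 - d) C := by
    refine List.ext_getElem (by simp; omega) fun i _ _ => ?_
    simp only [List.getElem_ofFn, List.getElem_append, List.getElem_cons, List.getElem_replicate,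
      List.length_replicate]
    split_ifs <;> first | rfl | omega
  simp [this, mul_assoc]

theorem Subgroup.isOfFinOrder_of_mem_closure {G : Type*} [Group G] {S : Set G}
    (hcomm : ∀ a ∈ S, ∀ b ∈ S, Commute a b) (htors : ∀ a ∈ S, IsOfFinOrder a) {g : G}
    (hg : g ∈ closure S) : IsOfFinOrder g := by
  have := isMulCommutative_closure hcomm
  induction hg using closure_induction with
  | mem a ha => exact htors a ha
  | one => exact IsOfFinOrder.one
  | mul u v hu hv hu' hv' => exact Commute.isOfFinOrder_mul (setLike_mul_comm hu hv) hu' hv'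
  | inv u _ hu' => exact hu'.inv

theorem MonoidHom.isComplement'_ker_range {G K : Type*} [Group G] [Group K] (φ : G →* K)
    (s : K →* G) (hs : Function.LeftInverse φ s) : φ.ker.IsComplement' s.range := by
  refine Subgroup.isComplement'_of_disjoint_and_mul_eq_univ ?_ ?_
  · refine Subgroup.disjoint_def.mpr fun {g} hker hrange => ?_
    obtain ⟨k, rfl⟩ := hrange
    rw [mem_ker, hs k] at hker
    rw [hker, map_one]
  · refine Set.eq_univ_of_forall fun g =>
      ⟨g * (s (φ g))⁻¹, ?_, s (φ g), ⟨φ g, rfl⟩, inv_mul_cancel_right g _⟩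
    simp [mem_ker, hs (φ g)]

theorem Subgroup.le_of_sup_eq_top_of_disjoint {G : Type*} [Group G] {N K Z : Subgroup G}
    [N.Normal] (hNK : N ≤ K) (hsup : N ⊔ Z = ⊤) (hdisj : Disjoint K Z) : K ≤ N := by
  intro g hg
  obtain ⟨t, ht, z, hz, rfl⟩ := mem_sup_of_normal_left.mp (hsup ▸ mem_top g : g ∈ N ⊔ Z)
  have hz1 : z = 1 := disjoint_def.mp hdisj ((mul_mem_cancel_left (hNK ht)).mp hg) hz
  simpa [hz1] using ht

namespace SG

variable {n l : ℕ} {H : Subgroup (Equiv.Perm (Fin n))} {σ : Equiv.Perm (Fin n)}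

theorem prod_ofFn_Xg_perm (hσ : σ ∈ H) (w : Fin l → Fin n) :
    (List.ofFn fun i => Xg n l H (w i)).prod = (List.ofFn fun i => Xg n l H (σ (w i))).prod := by
  have h := PresentedGroup.one_of_mem (rels := permRels n l H) ⟨σ, hσ, w, rfl⟩
  rwa [map_mul, map_inv, map_list_prod, map_list_prod, List.map_ofFn, List.map_ofFn,
    mul_inv_eq_one] at h

theorem Xg_pow_mul_Xg_mul_pow_perm (hσ : σ ∈ H) (b c : Fin n) {d : ℕ} (hd : d < l) :
    Xg n l H c ^ d * Xg n l H b * Xg n l H c ^ (l - 1 - d) =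
      Xg n l H (σ c) ^ d * Xg n l H (σ b) * Xg n l H (σ c) ^ (l - 1 - d) := by
  have h := prod_ofFn_Xg_perm hσ fun i : Fin l => if (i : ℕ) = d then b else c
  simp only [apply_ite (Xg n l H), apply_ite σ] at h
  rwa [List.prod_ofFn_ite_eq hd, List.prod_ofFn_ite_eq hd] at h

theorem Xg_pow_perm (hl : 0 < l) (hσ : σ ∈ H) (c : Fin n) :
    Xg n l H c ^ l = Xg n l H (σ c) ^ l := by
  have h := Xg_pow_mul_Xg_mul_pow_perm hσ c c hl
  simp only [pow_zero, one_mul, Nat.sub_zero] at h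
  rwa [← pow_succ', ← pow_succ', Nat.sub_add_cancel hl] at h

/-- For `0 ≤ k < l` this is the relation for the word `c^k b c^(l-1-k)` multiplied by
`x_c⁻ˡ = x_{σc}⁻ˡ`; conjugating by `x_c^l = x_{σc}^l` shifts `k` by multiples of `l`. -/
theorem conj_zpow_Xg_perm (hl : 0 < l) (hσ : σ ∈ H) (b c : Fin n) (k : ℤ) :
    MulAut.conj (Xg n l H c ^ k) (Xg n l H b * (Xg n l H c)⁻¹) =
      MulAut.conj (Xg n l H (σ c) ^ k) (Xg n l H (σ b) * (Xg n l H (σ c))⁻¹) := by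
  have hconj_pow {d : ℕ} (hd : d < l) (x y : SG n l H) :
      MulAut.conj (x ^ d) (y * x⁻¹) = x ^ d * y * x ^ (l - 1 - d) * (x ^ l)⁻¹ := by
    obtain ⟨m, rfl⟩ := Nat.exists_eq_add_of_lt hd
    rw [MulAut.conj_apply, show d + m + 1 - 1 - d = m by omega]
    group
  have hsplit (x : SG n l H) (q : ℤ) (r : ℕ) :
      x ^ ((l : ℤ) * q + r) = (x ^ l) ^ q * x ^ r := by
    rw [zpow_add, zpow_mul, zpow_natCast, zpow_natCast]
  obtain ⟨r, hr⟩ := Int.eq_ofNat_of_zero_le (Int.emod_nonneg k (by omega : (l : ℤ) ≠ 0))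
  have hrl : r < l := by have := Int.emod_lt_of_pos k (by omega : (0 : ℤ) < l); omega
  rw [← Int.mul_ediv_add_emod k l, hr, hsplit, hsplit, map_mul MulAut.conj, map_mul MulAut.conj,
    MulAut.mul_apply, MulAut.mul_apply, hconj_pow hrl, hconj_pow hrl,
    Xg_pow_mul_Xg_mul_pow_perm hσ b c hrl, Xg_pow_perm hl hσ c]

theorem Xg_mul_inv_perm (hl : 0 < l) (hσ : σ ∈ H) (b c : Fin n) :
    Xg n l H b * (Xg n l H c)⁻¹ = Xg n l H (σ b) * (Xg n l H (σ c))⁻¹ := by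
  simpa using conj_zpow_Xg_perm hl hσ b c 0

theorem inv_Xg_mul_perm (hl : 0 < l) (hσ : σ ∈ H) (b c : Fin n) :
    (Xg n l H c)⁻¹ * Xg n l H b = (Xg n l H (σ c))⁻¹ * Xg n l H (σ b) := by
  simpa [mul_assoc] using conj_zpow_Xg_perm hl hσ b c (-1)

@[simps]
def ratioHom (hl : 0 < l) (e : Fin n) : H →* SG n l H where
  toFun σ := Xg n l H (σ.1 e) * (Xg n l H e)⁻¹
  map_one' := mul_inv_cancel _
  map_mul' σ τ := by
    change Xg n l H (σ.1 (τ.1 e)) * _ = _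
    rw [mul_assoc, ← mul_assoc (Xg n l H e)⁻¹, inv_Xg_mul_perm hl σ.2 (τ.1 e) e, mul_assoc,
      mul_inv_cancel_left]

theorem isOfFinOrder_Xg_mul_inv (hl : 0 < l) (htrans : ∀ i j : Fin n, ∃ σ ∈ H, σ i = j)
    (a e : Fin n) : IsOfFinOrder (Xg n l H a * (Xg n l H e)⁻¹) := by
  obtain ⟨σ, hσ, rfl⟩ := htrans e a
  have hfin : IsOfFinOrder (⟨σ, hσ⟩ : H) := isOfFinOrder_of_finite _
  simpa using (ratioHom hl e).isOfFinOrder hfin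

theorem conj_zpow_Xg_perm_eq_conj_zpow_Xg (hl : 0 < l) (hσ : σ ∈ H) (b e : Fin n) (k : ℤ) :
    MulAut.conj (Xg n l H (σ e) ^ k) (Xg n l H b * (Xg n l H e)⁻¹) =
      MulAut.conj (Xg n l H e ^ k) (Xg n l H b * (Xg n l H e)⁻¹) := by
  rw [conj_zpow_Xg_perm hl hσ b e k, ← Xg_mul_inv_perm hl hσ b e]

theorem commute_Xg_mul_inv_conj_zpow (hl : 0 < l) (htrans : ∀ i j : Fin n, ∃ σ ∈ H, σ i = j)
    (a b e : Fin n) (k : ℤ) :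
    Commute (Xg n l H a * (Xg n l H e)⁻¹)
      (MulAut.conj (Xg n l H e ^ k) (Xg n l H b * (Xg n l H e)⁻¹)) := by
  obtain ⟨σ, hσ, rfl⟩ := htrans e a
  -- `x_a x_e⁻¹ · x_e^k = x_a · x_e^(k-1)`, and on `x_b x_e⁻¹` conjugation by powers
  -- of `x_a` agrees with conjugation by the same powers of `x_e`.
  set x := Xg n l H e
  set u := Xg n l H b * x⁻¹
  set xa := Xg n l H (σ e)
  have hfix : MulAut.conj (xa * x⁻¹) (MulAut.conj (x ^ k) u) = MulAut.conj (x ^ k) u := calc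
    _ = MulAut.conj xa (MulAut.conj (x ^ (k - 1)) u) := by
        rw [← MulAut.mul_apply, ← map_mul, ← MulAut.mul_apply, ← map_mul]
        congr 2
        group
    _ = MulAut.conj xa (MulAut.conj (xa ^ (k - 1)) u) := by
        rw [conj_zpow_Xg_perm_eq_conj_zpow_Xg hl hσ]
    _ = MulAut.conj (xa ^ k) u := by
        rw [← MulAut.mul_apply, ← map_mul, ← zpow_one_add, add_sub_cancel]
    _ = MulAut.conj (x ^ k) u := conj_zpow_Xg_perm_eq_conj_zpow_Xg hl hσ b e k
  exact mul_inv_eq_iff_eq_mul.mp hfix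

theorem commute_conj_zpow_Xg_mul_inv (hl : 0 < l) (htrans : ∀ i j : Fin n, ∃ σ ∈ H, σ i = j)
    (a b e : Fin n) (j k : ℤ) :
    Commute (MulAut.conj (Xg n l H e ^ j) (Xg n l H a * (Xg n l H e)⁻¹))
      (MulAut.conj (Xg n l H e ^ k) (Xg n l H b * (Xg n l H e)⁻¹)) := by
  have h := (commute_Xg_mul_inv_conj_zpow hl htrans a b e (k - j)).map
    (MulAut.conj (Xg n l H e ^ j))
  rwa [← MulAut.mul_apply, ← map_mul, ← zpow_add, add_sub_cancel] at h

theorem eq_top_of_Xg_mem_of_Xg_mul_inv_mem {K : Subgroup (SG n l H)} (e : Fin n)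
    (he : Xg n l H e ∈ K) (hK : ∀ b, Xg n l H b * (Xg n l H e)⁻¹ ∈ K) : K = ⊤ := by
  refine eq_top_iff.mpr fun g _ => PresentedGroup.generated_by _ K (fun b => ?_) g
  simpa [Xg] using mul_mem (hK b) he

variable (n l H) in
/-- This turns out to be the kernel of `degree`, i.e. the torsion subgroup `T(G)`. -/
def conjClosure (e : Fin n) : Subgroup (SG n l H) :=
  Subgroup.closure <| Set.range fun p : ℤ × Fin n =>
    MulAut.conj (Xg n l H e ^ p.1) (Xg n l H p.2 * (Xg n l H e)⁻¹)

theorem isOfFinOrder_of_mem_conjClosure (hl : 0 < l)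
    (htrans : ∀ i j : Fin n, ∃ σ ∈ H, σ i = j) (e : Fin n) {g : SG n l H}
    (hg : g ∈ conjClosure n l H e) : IsOfFinOrder g := by
  refine Subgroup.isOfFinOrder_of_mem_closure ?_ ?_ hg
  · rintro _ ⟨⟨j, a⟩, rfl⟩ _ ⟨⟨k, b⟩, rfl⟩
    exact commute_conj_zpow_Xg_mul_inv hl htrans a b e j k
  · rintro _ ⟨⟨k, b⟩, rfl⟩
    exact (MulAut.conj _).toMonoidHom.isOfFinOrder (isOfFinOrder_Xg_mul_inv hl htrans b e)

theorem conjClosure_normal (e : Fin n) : (conjClosure n l H e).Normal := by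
  set f := fun p : ℤ × Fin n => MulAut.conj (Xg n l H e ^ p.1) (Xg n l H p.2 * (Xg n l H e)⁻¹)
  have hshift : MulAut.conj (Xg n l H e) ∘ f = f ∘ Prod.map (Equiv.addLeft 1) id := by
    ext ⟨k, b⟩
    simp only [f, Function.comp_apply, Prod.map, Equiv.coe_addLeft, id, ← MulAut.mul_apply,
      ← map_mul, zpow_one_add]
  rw [← Subgroup.normalizer_eq_top_iff]
  refine eq_top_of_Xg_mem_of_Xg_mul_inv_mem e ?_ fun b =>
    Subgroup.le_normalizer (Subgroup.subset_closure ⟨(0, b), by simp⟩)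
  refine Subgroup.normalizer_le_normalizer_closure _ ?_
  rw [Subgroup.mem_normalizer_iff_conj_image_eq, ← Set.range_comp, hshift,
    ((Equiv.addLeft 1).surjective.prodMap Function.surjective_id).range_comp]

theorem conjClosure_sup_zpowers (e : Fin n) :
    conjClosure n l H e ⊔ Subgroup.zpowers (Xg n l H e) = ⊤ := by
  refine eq_top_of_Xg_mem_of_Xg_mul_inv_mem e
    (Subgroup.mem_sup_right (Subgroup.mem_zpowers _)) fun b => Subgroup.mem_sup_left ?_
  exact Subgroup.subset_closure ⟨(0, b), by simp⟩

variable (n l H) in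
def degree : SG n l H →* Multiplicative ℤ :=
  PresentedGroup.toGroup (f := fun _ => Multiplicative.ofAdd 1) <| by
    rintro _ ⟨σ, -, w, rfl⟩
    simp [map_list_prod, List.map_ofFn, Function.comp_def]

theorem degree_Xg (i : Fin n) : degree n l H (Xg n l H i) = Multiplicative.ofAdd 1 :=
  PresentedGroup.toGroup.of _

theorem ker_degree_isComplement' (e : Fin n) :
    (degree n l H).ker.IsComplement' (Subgroup.zpowers (Xg n l H e)) := by
  refine (degree n l H).isComplement'_ker_range (zpowersHom _ (Xg n l H e)) fun k => ?_
  have : (degree n l H).comp (zpowersHom _ (Xg n l H e)) = MonoidHom.id _ :=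
    MonoidHom.ext_mint (by simp [degree_Xg])
  exact DFunLike.congr_fun this k

theorem conjClosure_le_ker_degree (e : Fin n) : conjClosure n l H e ≤ (degree n l H).ker := by
  refine Subgroup.closure_le _ |>.mpr ?_
  rintro _ ⟨⟨k, b⟩, rfl⟩
  simp only [SetLike.mem_coe, MonoidHom.mem_ker, MulAut.conj_apply]
  simp [degree_Xg]

theorem ker_degree_le_conjClosure (e : Fin n) : (degree n l H).ker ≤ conjClosure n l H e :=
  have := conjClosure_normal (l := l) (H := H) e
  Subgroup.le_of_sup_eq_top_of_disjoint (conjClosure_le_ker_degree e)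
    (conjClosure_sup_zpowers e) (ker_degree_isComplement' e).disjoint

theorem mem_ker_degree_iff_isOfFinOrder (hn : 0 < n) (hl : 0 < l)
    (htrans : ∀ i j : Fin n, ∃ σ ∈ H, σ i = j) (g : SG n l H) :
    g ∈ (degree n l H).ker ↔ IsOfFinOrder g :=
  ⟨fun hg => isOfFinOrder_of_mem_conjClosure hl htrans ⟨0, hn⟩
      (ker_degree_le_conjClosure _ hg),
    fun hg => (isOfFinOrder_iff_eq_one _).mp ((degree n l H).isOfFinOrder hg)⟩

end SG

theorem fraction_group_semidirect_product_general (n l : ℕ) (hn : 0 < n) (hl : 2 ≤ l) (H : Subgroup (Equiv.Perm (Fin n)))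
    (htrans : ∀ i j : Fin n, ∃ σ ∈ H, σ i = j) :
    ∃ T : Subgroup (SG n l H),
      (∀ g, g ∈ T ↔ IsOfFinOrder g) ∧ T.Normal ∧
      T.IsComplement' (Subgroup.zpowers (Xg n l H ⟨0, hn⟩)) := by
  exact ⟨(SG.degree n l H).ker, SG.mem_ker_degree_iff_isOfFinOrder hn (by omega) htrans,
    MonoidHom.normal_ker _, SG.ker_degree_isComplement' _⟩

theorem fraction_group_semidirect_product (n l : ℕ) (hn : 0 < n) (hl : 2 ≤ l) (H : Subgroup (Equiv.Perm (Fin n)))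
    (htrans : ∀ i j : Fin n, ∃ σ ∈ H, σ i = j)
    (hab : ∀ σ ∈ H, ∀ τ ∈ H, σ * τ = τ * σ) :
    ∃ T : Subgroup (SG n l H),
      (∀ g, g ∈ T ↔ IsOfFinOrder g) ∧ T.Normal ∧
      T.IsComplement' (Subgroup.zpowers (Xg n l H ⟨0, hn⟩)) :=
  fraction_group_semidirect_product_general n l hn hl H htrans
end

section
/- Let H be a transitive abelian subgroup of Sym_n and let G be the group of fractions of S_{n,l}(H). Then the cyclic subgroup generated by x_1^l is a central subgroup of finite index in G. -/
/-! The relation for `σ ∈ H` with `σ i = 1`, applied to `x_i ^ l`, shows that all `x_i ^ l` equal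
`z = x_1 ^ l`; being a power of every generator, `z` is central. Applying a relation to the
window `a v` and its inverse to the window `v b` (with `|v| = l - 1`) gives
`x_a v x_b = x_{σ a} v x_{σ⁻¹ b}`: a letter may be replaced by `x_1` at the cost of changing the
letter `l` places further on. Doing so to the first `l` letters of a positive word of length `2l`
turns it into `z` times a word of length `l`. Modulo `⟨z⟩` every generator has order dividing
`l`, so each coset is represented by a positive word, hence by one of length `< 2l`. -/

lemma Subgroup.normal_of_le_center {G : Type*} [Group G] {N : Subgroup G}
    (hN : N ≤ Subgroup.center G) : N.Normal :=
  ⟨fun a ha g => by rwa [Subgroup.mem_center_iff.1 (hN ha) g, mul_inv_cancel_right]⟩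

namespace SG

variable {n l : ℕ} {H : Subgroup (Equiv.Perm (Fin n))}

variable (n l H) in
def xword (w : List (Fin n)) : SG n l H :=
  (w.map (Xg n l H)).prod

@[simp] lemma xword_nil : xword n l H [] = 1 := rfl

@[simp] lemma xword_cons (a : Fin n) (w : List (Fin n)) :
    xword n l H (a :: w) = Xg n l H a * xword n l H w := List.prod_cons

@[simp] lemma xword_append (u v : List (Fin n)) :
    xword n l H (u ++ v) = xword n l H u * xword n l H v := by
  simp [xword]

@[simp] lemma xword_replicate (m : ℕ) (a : Fin n) :
    xword n l H (List.replicate m a) = Xg n l H a ^ m := by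
  simp [xword]

lemma mk_prod_map_of (w : List (Fin n)) :
    PresentedGroup.mk (permRels n l H) (w.map FreeGroup.of).prod = xword n l H w := by
  rw [map_list_prod, List.map_map]
  rfl

lemma xword_map_of_mem {σ : Equiv.Perm (Fin n)} (hσ : σ ∈ H) {u : List (Fin n)}
    (hu : u.length = l) : xword n l H (u.map σ) = xword n l H u := by
  subst hu
  have hrel : (u.map FreeGroup.of).prod * ((u.map σ).map FreeGroup.of).prod⁻¹ ∈
      permRels n u.length H := by
    refine ⟨σ, hσ, u.get, ?_⟩
    simp only [List.get_eq_getElem, List.ofFn_getElem_eq_map, List.map_map]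
    rw [← List.ofFn_getElem_eq_map u (FreeGroup.of ∘ σ)]
    rfl
  rw [← mk_prod_map_of, ← mk_prod_map_of, PresentedGroup.mk_eq_mk_of_mul_inv_mem hrel]

lemma xword_cons_append_singleton {σ : Equiv.Perm (Fin n)} (hσ : σ ∈ H) (a b : Fin n)
    {v : List (Fin n)} (hv : v.length + 1 = l) :
    xword n l H (a :: v ++ [b]) = xword n l H (σ a :: v ++ [σ⁻¹ b]) := by
  have hleft : xword n l H (a :: v) = xword n l H (σ a :: v.map σ) :=
    (xword_map_of_mem hσ (u := a :: v) (by simpa using hv)).symm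
  have hright : xword n l H (v.map σ ++ [b]) = xword n l H (v ++ [σ⁻¹ b]) := by
    simpa [Function.comp_def] using
      (xword_map_of_mem (H.inv_mem hσ) (u := v.map σ ++ [b]) (by simpa using hv)).symm
  calc xword n l H (a :: v ++ [b]) = xword n l H (a :: v) * Xg n l H b := by simp [mul_assoc]
    _ = Xg n l H (σ a) * xword n l H (v.map σ ++ [b]) := by simp [hleft, mul_assoc]
    _ = xword n l H (σ a :: v ++ [σ⁻¹ b]) := by simp [hright]

variable (htrans : ∀ i j : Fin n, ∃ σ ∈ H, σ i = j)
include htrans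

lemma exists_xword_append_append_eq_pow_mul (i₀ : Fin n) {u mid v : List (Fin n)}
    (huv : u.length = v.length) (hmid : u.length + mid.length = l) :
    ∃ v', v'.length = v.length ∧
      xword n l H (u ++ mid ++ v) = Xg n l H i₀ ^ u.length * xword n l H (mid ++ v') := by
  induction u generalizing mid v with
  | nil => exact ⟨_, rfl, by simp⟩
  | cons a u ih =>
    obtain _ | ⟨b, v⟩ := v
    · simp at huv
    obtain ⟨σ, hσ, rfl⟩ := htrans a i₀
    simp only [List.length_cons, Nat.add_right_cancel_iff, Nat.add_right_comm] at huv hmid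
    obtain ⟨v', hv', hshift⟩ := ih (mid := mid ++ [σ⁻¹ b]) huv (by simp; omega)
    refine ⟨σ⁻¹ b :: v', by simpa using hv', ?_⟩
    have hswap := xword_cons_append_singleton hσ a b (v := u ++ mid) (by simp; omega)
    calc xword n l H (a :: u ++ mid ++ b :: v)
        = xword n l H (a :: (u ++ mid) ++ [b]) * xword n l H v := by simp [mul_assoc]
      _ = Xg n l H (σ a) * xword n l H (u ++ (mid ++ [σ⁻¹ b]) ++ v) := by
        rw [hswap]; simp [mul_assoc]
      _ = Xg n l H (σ a) ^ (a :: u).length * xword n l H (mid ++ σ⁻¹ b :: v') := by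
        rw [hshift]; simp [pow_succ', mul_assoc]

lemma exists_xword_append_eq_pow_mul (i₀ : Fin n) {u v : List (Fin n)} (hu : u.length = l)
    (hv : v.length = l) :
    ∃ v', v'.length = l ∧ xword n l H (u ++ v) = Xg n l H i₀ ^ l * xword n l H v' := by
  obtain ⟨v', hv', h⟩ := exists_xword_append_append_eq_pow_mul htrans i₀ (mid := [])
    (hu.trans hv.symm) (by simpa using hu)
  exact ⟨v', hv'.trans hv, by simpa [hu] using h⟩

lemma Xg_pow_eq (i j : Fin n) : Xg n l H i ^ l = Xg n l H j ^ l := by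
  obtain ⟨σ, hσ, rfl⟩ := htrans i j
  simpa using (xword_map_of_mem hσ (u := List.replicate l i) List.length_replicate).symm

lemma Xg_pow_mem_center (i : Fin n) : Xg n l H i ^ l ∈ Subgroup.center (SG n l H) := by
  refine Subgroup.mem_center_iff.2 fun g => Subgroup.mem_centralizer_singleton_iff.1 ?_
  refine PresentedGroup.generated_by _ _ (fun j => ?_) g
  rw [Subgroup.mem_centralizer_singleton_iff, ← Xg_pow_eq htrans j i]
  exact (pow_mul_comm' _ _).symm

variable {N : Subgroup (SG n l H)} [N.Normal] {i₀ : Fin n} (hz : Xg n l H i₀ ^ l ∈ N)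
  (hl : 0 < l)
include hz hl

lemma exists_xword_eq_mk (g : SG n l H) : ∃ w, (xword n l H w : SG n l H ⧸ N) = g := by
  have hinv (j : Fin n) :
      ((Xg n l H j)⁻¹ : SG n l H ⧸ N) = xword n l H (List.replicate (l - 1) j) := by
    rw [xword_replicate, QuotientGroup.mk_pow]
    refine inv_eq_of_mul_eq_one_right ?_
    rw [← pow_succ', Nat.sub_add_cancel hl, ← QuotientGroup.mk_pow, Xg_pow_eq htrans j i₀,
      QuotientGroup.eq_one_iff]
    exact hz
  have hg : g ∈ Subgroup.closure (Set.range (Xg n l H)) :=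
    (PresentedGroup.closure_range_of _).symm ▸ Subgroup.mem_top g
  induction hg using Subgroup.closure_induction_right with
  | one => exact ⟨[], rfl⟩
  | mul_right g _ _ hj ih =>
    obtain ⟨w, hw⟩ := ih
    obtain ⟨j, rfl⟩ := hj
    exact ⟨w ++ [j], by simp [hw]⟩
  | mul_inv_cancel g _ _ hj ih =>
    obtain ⟨w, hw⟩ := ih
    obtain ⟨j, rfl⟩ := hj
    exact ⟨w ++ List.replicate (l - 1) j, by simp [hw, hinv]⟩

lemma exists_short_xword_mk_eq (w : List (Fin n)) :
    ∃ w', w'.length < 2 * l ∧ (xword n l H w' : SG n l H ⧸ N) = xword n l H w := by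
  induction w using List.reverseRecOn with
  | nil => exact ⟨[], by simpa using hl, rfl⟩
  | append_singleton w j ih =>
    obtain ⟨w', hw', heq⟩ := ih
    have hmk : (xword n l H (w' ++ [j]) : SG n l H ⧸ N) = xword n l H (w ++ [j]) := by
      simp [heq]
    by_cases hshort : w'.length + 1 < 2 * l
    · exact ⟨w' ++ [j], by simpa using hshort, hmk⟩
    · have hlen : (w' ++ [j]).length = 2 * l := by simp; omega
      have hsplit := List.take_append_drop l (w' ++ [j])
      obtain ⟨v, hv, hred⟩ := exists_xword_append_eq_pow_mul (l := l) htrans i₀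
        (u := (w' ++ [j]).take l) (v := (w' ++ [j]).drop l) (by simp [hlen]; omega)
        (by simp [hlen]; omega)
      refine ⟨v, by omega, ?_⟩
      rw [← hmk, ← hsplit, hred, QuotientGroup.mk_mul, (QuotientGroup.eq_one_iff _).2 hz,
        one_mul]

lemma finite_quotient : Finite (SG n l H ⧸ N) := by
  have := (List.finite_length_lt (Fin n) (2 * l)).to_subtype
  refine Finite.of_surjective
    (fun w : {w : List (Fin n) | w.length < 2 * l} => (xword n l H w : SG n l H ⧸ N)) ?_
  intro q
  obtain ⟨g, rfl⟩ := QuotientGroup.mk_surjective q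
  obtain ⟨w, hw⟩ := exists_xword_eq_mk htrans hz hl g
  obtain ⟨w', hw', heq⟩ := exists_short_xword_mk_eq htrans hz hl w
  exact ⟨⟨w', hw'⟩, heq.trans hw⟩

end SG

theorem zpowers_x1_pow_l_central_finite_index_general (n l : ℕ) (hn : 0 < n) (hl : 2 ≤ l) (H : Subgroup (Equiv.Perm (Fin n)))
    (htrans : ∀ i j : Fin n, ∃ σ ∈ H, σ i = j) :
    Subgroup.zpowers (Xg n l H ⟨0, hn⟩ ^ l) ≤ Subgroup.center (SG n l H) ∧
      (Subgroup.zpowers (Xg n l H ⟨0, hn⟩ ^ l)).FiniteIndex := by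
  have hcentral := Subgroup.zpowers_le.2 (SG.Xg_pow_mem_center (l := l) htrans ⟨0, hn⟩)
  have := Subgroup.normal_of_le_center hcentral
  have := SG.finite_quotient htrans (Subgroup.mem_zpowers (Xg n l H ⟨0, hn⟩ ^ l)) (by omega)
  exact ⟨hcentral, Subgroup.finiteIndex_of_finite_quotient⟩

theorem zpowers_x1_pow_l_central_finite_index (n l : ℕ) (hn : 0 < n) (hl : 2 ≤ l) (H : Subgroup (Equiv.Perm (Fin n)))
    (htrans : ∀ i j : Fin n, ∃ σ ∈ H, σ i = j)
    (hab : ∀ σ ∈ H, ∀ τ ∈ H, σ * τ = τ * σ) :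
    Subgroup.zpowers (Xg n l H ⟨0, hn⟩ ^ l) ≤ Subgroup.center (SG n l H) ∧
      (Subgroup.zpowers (Xg n l H ⟨0, hn⟩ ^ l)).FiniteIndex :=
  zpowers_x1_pow_l_central_finite_index_general n l hn hl H htrans
end

section
/- Let H be a non-transitive, semi-regular, abelian subgroup of Sym_n with orbit representatives i_1, ..., i_r (r > 1), and let K be a field. Then K[S_{n,l}(H)] is a finitely generated free right module over the free K-algebra R = K⟨x_{i_1}, ..., x_{i_r}⟩, with free basis given by 1 together with the elements x_{j_1}⋯x_{j_k} x_{σ(i_j)} for 0 ≤ k ≤ l−2, (j_1,...,j_k) ∈ {1,...,n}^k, j ∈ {1,...,r}, σ ∈ H \ {id}. -/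
/-- Index type for the free right module basis of `K[S_{n,l}(H)]` over the free algebra on
the orbit representatives: `1` together with the elements
`x_{j_1}⋯x_{j_k} x_{σ(i_j)}` for `0 ≤ k ≤ l-2`, `σ ∈ H \\ {1}`. -/
def BasisIdx (n l r : ℕ) (H : Subgroup (Equiv.Perm (Fin n))) : Type :=
  Unit ⊕ (Σ k : Fin (l - 1), (Fin (k : ℕ) → Fin n) × (Fin r × {σ : H // σ ≠ 1}))

/-- The basis elements of `K[S_{n,l}(H)]` as a right module over the free algebra on the
orbit representatives. -/
noncomputable def basisElem (K : Type) [Field K] (n l r : ℕ) (H : Subgroup (Equiv.Perm (Fin n)))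
    (reps : Fin r → Fin n) : BasisIdx n l r H → MonoidAlgebra K (SM n l H)
  | Sum.inl _ => 1
  | Sum.inr ⟨_, j, t, σ⟩ =>
      MonoidAlgebra.of K (SM n l H)
        ((List.map (xg n l H) (List.ofFn j)).prod *
          xg n l H ((σ.1 : Equiv.Perm (Fin n)) (reps t)))

open Function Equiv

theorem MonoidAlgebra.bijective_sum_of_mul_mapDomain {k M N ι : Type*} [CommSemiring k]
    [Monoid M] [Monoid N] {φ : N →* M} {e : ι → M}
    (he : Bijective fun p : ι × N => e p.1 * φ p.2) :
    Bijective fun g : ι →₀ MonoidAlgebra k N =>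
      g.sum fun i c => of k M (e i) * mapDomainAlgHom k k φ c := by
  let F : (ι →₀ MonoidAlgebra k N) →ₗ[k] MonoidAlgebra k M :=
    Finsupp.lsum k fun i =>
      (LinearMap.mulLeft k (of k M (e i))).comp (mapDomainAlgHom k k φ).toLinearMap
  let E : (ι →₀ MonoidAlgebra k N) ≃ₗ[k] MonoidAlgebra k M :=
    (Finsupp.mapRange.linearEquiv (coeffLinearEquiv k)).trans <|
      (Finsupp.curryLinearEquiv k).symm.trans <|
        (Finsupp.domLCongr (Equiv.ofBijective _ he)).trans (coeffLinearEquiv k).symm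
  have hFE : F = E.toLinearMap := by
    refine Finsupp.lhom_ext' fun i => MonoidAlgebra.lhom_ext' fun n => LinearMap.ext fun c => ?_
    simp [F, E]
  convert E.bijective using 1
  rw [← LinearEquiv.coe_coe, ← hFE]
  rfl

theorem FreeAlgebra.lift_of_eq_mapDomainAlgHom_comp {R X M : Type*} [CommSemiring R] [Monoid M]
    (φ : FreeMonoid X →* M) :
    lift R (fun x => MonoidAlgebra.of R M (φ (.of x))) =
      (MonoidAlgebra.mapDomainAlgHom R R φ).comp equivMonoidAlgebraFreeMonoid.toAlgHom := by
  ext x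
  simp [equivMonoidAlgebraFreeMonoid]

theorem FreeAlgebra.bijective_sum_of_mul_lift {k M X ι : Type*} [CommSemiring k] [Monoid M]
    {φ : FreeMonoid X →* M} {e : ι → M}
    (he : Bijective fun p : ι × FreeMonoid X => e p.1 * φ p.2) :
    Bijective fun g : ι →₀ FreeAlgebra k X =>
      g.sum fun i c => MonoidAlgebra.of k M (e i) * lift k (fun x => .of k M (φ (.of x))) c := by
  convert (MonoidAlgebra.bijective_sum_of_mul_mapDomain (k := k) he).comp
    (Finsupp.mapRange.linearEquiv (R := k) equivMonoidAlgebraFreeMonoid.toLinearEquiv).bijective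
    using 2 with g
  rw [lift_of_eq_mapDomainAlgHom_comp]
  simp [Finsupp.sum_mapRange_index]

namespace List

variable {α : Type*} {p : α → Prop}

theorem forall_or_exists_append_cons (p : α → Prop) (x : List α) :
    (∀ a ∈ x, p a) ∨ ∃ u a v, x = u ++ a :: v ∧ ¬p a ∧ ∀ b ∈ v, p b := by
  induction x with
  | nil => simp
  | cons c x ih =>
    rcases ih with hx | ⟨u, a, v, rfl, ha, hv⟩
    · by_cases hc : p c
      · exact .inl (List.forall_mem_cons.mpr ⟨hc, hx⟩)
      · exact .inr ⟨[], c, x, rfl, hc, hx⟩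
    · exact .inr ⟨c :: u, a, v, rfl, ha, hv⟩

theorem eq_of_append_cons_eq {u u' v v' : List α} {a a' : α} (ha : ¬p a) (ha' : ¬p a')
    (hv : ∀ b ∈ v, p b) (hv' : ∀ b ∈ v', p b) (h : u ++ a :: v = u' ++ a' :: v') :
    u = u' ∧ a = a' ∧ v = v' := by
  induction u generalizing u' with
  | nil =>
    cases u' with
    | nil => simpa using h
    | cons b u' =>
      simp only [nil_append, cons_append, cons.injEq] at h
      exact absurd (hv a' (by simp [h.2])) ha'
  | cons b u ih =>
    cases u' with
    | nil =>
      simp only [nil_append, cons_append, cons.injEq] at h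
      exact absurd (hv' a (by simp [← h.2])) ha
    | cons b' u' =>
      simp only [cons_append, cons.injEq] at h
      obtain ⟨rfl, rfl, rfl⟩ := ih h.2
      exact ⟨by rw [h.1], rfl, rfl⟩

end List

theorem ZMod.eq_of_natCast_eq_of_lt {l s s' : ℕ} (hs : s < l) (hs' : s' < l)
    (h : (s : ZMod l) = s') : s = s' := by
  simpa [Nat.mod_eq_of_lt hs, Nat.mod_eq_of_lt hs'] using (ZMod.natCast_eq_natCast_iff' s s' l).mp h

section ResidueProd

variable {α G : Type*} [Monoid G] (l : ℕ) (g : α → G)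

/-- `residueProd l g x c` is the product of `g` over the letters of `x` whose position is
congruent to `c` modulo `l`. -/
def residueProd : List α → ZMod l → G
  | [], _ => 1
  | a :: x, c => (if c = 0 then g a else 1) * residueProd x (c - 1)

@[simp] theorem residueProd_nil (c : ZMod l) : residueProd l g [] c = 1 := rfl

theorem residueProd_cons (a : α) (x : List α) (c : ZMod l) :
    residueProd l g (a :: x) c = (if c = 0 then g a else 1) * residueProd l g x (c - 1) := rfl

theorem residueProd_append (x y : List α) (c : ZMod l) :
    residueProd l g (x ++ y) c = residueProd l g x c * residueProd l g y (c - x.length) := by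
  induction x generalizing c with
  | nil => simp
  | cons a x ih =>
    rw [List.cons_append, residueProd_cons, residueProd_cons, ih, mul_assoc, List.length_cons,
      Nat.cast_succ, sub_sub, add_comm (1 : ZMod l)]

theorem residueProd_eq_one {x : List α} {c : ZMod l}
    (h : ∀ (s : ℕ) (hs : s < x.length), (s : ZMod l) = c → g x[s] = 1) :
    residueProd l g x c = 1 := by
  induction x generalizing c with
  | nil => rfl
  | cons a x ih =>
    have hx : residueProd l g x (c - 1) = 1 :=
      ih fun s hs hsc => h (s + 1) (by simpa using hs) (by push_cast; rw [hsc, sub_add_cancel])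
    have ha : c = 0 → g a = 1 := fun hc => h 0 (by simp) (by simp [hc])
    rw [residueProd_cons, hx, mul_one]
    split_ifs with hc
    exacts [ha hc, rfl]

theorem residueProd_eq_getElem {x : List α} {c : ZMod l} {s₀ : ℕ} (hs₀ : s₀ < x.length)
    (hc : (s₀ : ZMod l) = c)
    (h : ∀ (s : ℕ) (hs : s < x.length), s ≠ s₀ → (s : ZMod l) = c → g x[s] = 1) :
    residueProd l g x c = g x[s₀] := by
  induction x generalizing c s₀ with
  | nil => simp at hs₀
  | cons a x ih =>
    have h' (s : ℕ) (hs : s < x.length) (hne : s + 1 ≠ s₀) (hsc : (s : ZMod l) = c - 1) :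
        g x[s] = 1 :=
      h (s + 1) (by simpa using hs) hne (by push_cast; rw [hsc, sub_add_cancel])
    rw [residueProd_cons]
    cases s₀ with
    | zero =>
      subst hc
      rw [if_pos Nat.cast_zero, residueProd_eq_one l g fun s hs hsc => h' s hs (by omega) hsc,
        mul_one, List.getElem_cons_zero]
    | succ s₀ =>
      rw [ih (by simpa using hs₀) (by rw [← hc]; push_cast; ring)
        (fun s hs hne => h' s hs (by omega)), List.getElem_cons_succ]
      split_ifs with hc0
      · rw [show g a = 1 from h 0 (by simp) (by omega) (by simp [hc0]), one_mul]
      · rw [one_mul]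

theorem residueProd_of_length_eq [NeZero l] {x : List α} (hx : x.length = l) (c : ZMod l) :
    residueProd l g x c = g (x[c.val]'(hx ▸ c.val_lt)) := by
  refine residueProd_eq_getElem l g _ (ZMod.natCast_zmod_val c) fun s hs hne hsc => ?_
  subst hsc
  exact absurd (ZMod.val_cast_of_lt (hx ▸ hs)).symm hne

end ResidueProd

section ResidueCon

variable {α β G : Type*} [CommGroup G] (l : ℕ)

def residueCon (o : α → β) (g : α → G) : Con (FreeMonoid α) where
  r a b := a.toList.map o = b.toList.map o ∧
    ∃ τ : G, ∀ c, residueProd l g a.toList c = τ * residueProd l g b.toList c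
  iseqv :=
    { refl _ := ⟨rfl, 1, fun _ => (one_mul _).symm⟩
      symm := fun ⟨ho, τ, hτ⟩ =>
        ⟨ho.symm, τ⁻¹, fun c => by rw [hτ, inv_mul_cancel_left]⟩
      trans := fun ⟨ho, τ, hτ⟩ ⟨ho', τ', hτ'⟩ =>
        ⟨ho.trans ho', τ * τ', fun c => by rw [hτ, hτ', mul_assoc]⟩ }
  mul' := by
    rintro a b a' b' ⟨ho, τ, hτ⟩ ⟨ho', τ', hτ'⟩
    have hlen : a.toList.length = b.toList.length := by simpa using congrArg List.length ho
    refine ⟨by simp [ho, ho'], τ * τ', fun c => ?_⟩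
    simp only [FreeMonoid.toList_mul, residueProd_append, hτ, hτ', hlen]
    ac_rfl

end ResidueCon

section OrbitCoord

variable {α ι : Type*} {H : Subgroup (Perm α)} {reps : ι → α}

theorem bijective_smul_reps (hsr : ∀ a : α, ∀ σ ∈ H, σ a = a → σ = 1)
    (horb : ∀ a : α, ∃! t : ι, ∃ σ ∈ H, σ (reps t) = a) :
    Bijective fun p : ι × H => (p.2 : Perm α) (reps p.1) := by
  refine ⟨fun ⟨t, σ⟩ ⟨t', σ'⟩ h => ?_, fun a => ?_⟩
  · have ht : t = t' := (horb _).unique ⟨σ, σ.2, rfl⟩ ⟨σ', σ'.2, h.symm⟩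
    subst ht
    have hfix : ((σ' : Perm α)⁻¹ * σ) (reps t) = reps t := by
      simp only at h
      rw [Perm.mul_apply, h, Perm.inv_eq_iff_eq]
    have h1 := hsr _ _ (H.mul_mem (H.inv_mem σ'.2) σ.2) hfix
    rw [Prod.mk.injEq, Subtype.ext_iff]
    exact ⟨rfl, (inv_mul_eq_one.mp h1).symm⟩
  · obtain ⟨t, ⟨σ, hσ, h⟩, -⟩ := horb a
    exact ⟨(t, ⟨σ, hσ⟩), h⟩

variable (hfree : Bijective fun p : ι × H => (p.2 : Perm α) (reps p.1))

noncomputable def orbitCoord : α ≃ ι × H := (Equiv.ofBijective _ hfree).symm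

theorem orbitCoord_symm_apply (p : ι × H) :
    (orbitCoord hfree).symm p = (p.2 : Perm α) (reps p.1) := rfl

theorem orbitCoord_reps (t : ι) : orbitCoord hfree (reps t) = (t, 1) :=
  (orbitCoord hfree).eq_symm_apply.mp rfl

theorem orbitCoord_smul (σ : H) (a : α) :
    orbitCoord hfree ((σ : Perm α) a) =
      ((orbitCoord hfree a).1, σ * (orbitCoord hfree a).2) := by
  refine (orbitCoord hfree).eq_symm_apply.mp ?_
  rw [orbitCoord_symm_apply, Subgroup.coe_mul, Perm.mul_apply, ← orbitCoord_symm_apply hfree,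
    Equiv.symm_apply_apply]

theorem orbitCoord_snd_apply_reps (a : α) :
    ((orbitCoord hfree a).2 : Perm α) (reps (orbitCoord hfree a).1) = a :=
  (orbitCoord hfree).symm_apply_apply a

theorem inv_orbitCoord_snd_apply (a : α) :
    (((orbitCoord hfree a).2⁻¹ : H) : Perm α) a = reps (orbitCoord hfree a).1 := by
  rw [InvMemClass.coe_inv, Perm.inv_eq_iff_eq, orbitCoord_snd_apply_reps]

theorem reps_orbitCoord_fst {a : α} (ha : (orbitCoord hfree a).2 = 1) :
    reps (orbitCoord hfree a).1 = a := by
  simpa [ha] using orbitCoord_snd_apply_reps hfree a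

end OrbitCoord

namespace PermCon

variable {n l r : ℕ} {H : Subgroup (Perm (Fin n))} {reps : Fin r → Fin n}

theorem permCon_ofList_map {σ : Perm (Fin n)} (hσ : σ ∈ H)
    {x : List (Fin n)} (hx : x.length = l) :
    permCon n l H (FreeMonoid.ofList x) (FreeMonoid.ofList (x.map σ)) := by
  subst hx
  exact ConGen.Rel.of _ _ ⟨σ, hσ, fun i => x[i], by simp, by simp [List.ofFn_getElem_eq_map]⟩

def IsNormal {α ι : Type*} (l : ℕ) (reps : ι → α) (x : List α) : Prop :=
  ∃ (u : List α) (v : List ι), u.length < l ∧ x = u ++ v.map reps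

def basisWord (reps : Fin r → Fin n) : BasisIdx n l r H → List (Fin n)
  | .inl _ => []
  | .inr ⟨_, j, t, σ⟩ => List.ofFn j ++ [(σ.1 : Perm (Fin n)) (reps t)]

def normalWord (reps : Fin r → Fin n) (p : BasisIdx n l r H × FreeMonoid (Fin r)) :
    List (Fin n) :=
  basisWord reps p.1 ++ p.2.toList.map reps

theorem isNormal_normalWord [NeZero l] (p : BasisIdx n l r H × FreeMonoid (Fin r)) :
    IsNormal l reps (normalWord reps p) := by
  refine ⟨basisWord reps p.1, p.2.toList, ?_, rfl⟩
  rcases p with ⟨_ | ⟨k, j, t, σ⟩, w⟩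
  · exact Nat.pos_of_neZero l
  · simp [basisWord]
    omega

theorem prod_map_xg (x : List (Fin n)) :
    (x.map (xg n l H)).prod = (permCon n l H).mk' (.ofList x) := by
  induction x with
  | nil => simp
  | cons a x ih => simp [ih, FreeMonoid.ofList_cons, xg]

theorem basisElem_eq_of_mk_basisWord (K : Type) [Field K] (b : BasisIdx n l r H) :
    basisElem K n l r H reps b =
      MonoidAlgebra.of K (SM n l H) ((permCon n l H).mk' (.ofList (basisWord reps b))) := by
  rcases b with _ | ⟨k, j, t, σ⟩
  · simp [basisElem, basisWord, MonoidAlgebra.one_def]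
  · simp only [basisElem, prod_map_xg]
    simp [basisWord, xg]

section Free

variable (hfree : Bijective fun p : Fin r × H => (p.2 : Perm (Fin n)) (reps p.1))

include hfree in
/-- If `a :: y` is too long, one relation on its first `l` letters, by the inverse of the
`H`-component of the letter in position `l - 1`, turns that letter into a representative. -/
theorem IsNormal.exists_permCon_cons {y : List (Fin n)} (hy : IsNormal l reps y) (a : Fin n) :
    ∃ y', IsNormal l reps y' ∧ permCon n l H (.ofList (a :: y)) (.ofList y') := by
  obtain ⟨u, v, hu, rfl⟩ := hy
  by_cases hau : u.length + 1 < l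
  · exact ⟨(a :: u) ++ v.map reps, ⟨a :: u, v, hau, rfl⟩, Con.refl _ _⟩
  obtain ⟨u₀, b, hab⟩ := (List.eq_nil_or_concat' (a :: u)).resolve_left (List.cons_ne_nil _ _)
  have hlen : (u₀ ++ [b]).length = l := by
    rw [← hab, List.length_cons]
    omega
  set τ := (orbitCoord hfree b).2⁻¹
  refine ⟨u₀.map τ ++ ((orbitCoord hfree b).1 :: v).map reps,
    ⟨u₀.map τ, _, by simp at hlen ⊢; omega, rfl⟩, ?_⟩
  have hrel := (permCon n l H).mul (permCon_ofList_map τ.2 hlen)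
    (Con.refl _ (FreeMonoid.ofList (v.map reps)))
  rw [← FreeMonoid.ofList_append, ← FreeMonoid.ofList_append, List.map_append,
    List.map_singleton, inv_orbitCoord_snd_apply] at hrel
  rw [← List.cons_append, hab]
  simpa using hrel

include hfree in
theorem exists_isNormal_permCon [NeZero l] (x : List (Fin n)) :
    ∃ y, IsNormal l reps y ∧ permCon n l H (.ofList x) (.ofList y) := by
  induction x with
  | nil => exact ⟨[], ⟨[], [], Nat.pos_of_neZero l, rfl⟩, Con.refl _ _⟩
  | cons a x ih =>
    obtain ⟨y, hy, hxy⟩ := ih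
    obtain ⟨y', hy', hyy'⟩ := hy.exists_permCon_cons hfree a
    refine ⟨y', hy', (permCon n l H).trans ?_ hyy'⟩
    exact (permCon n l H).mul (Con.refl _ (FreeMonoid.of a)) hxy

open scoped IsMulCommutative

theorem permCon_le_residueCon [NeZero l] [IsMulCommutative H] :
    permCon n l H ≤
      residueCon l (fun a => (orbitCoord hfree a).1) (fun a => (orbitCoord hfree a).2) := by
  refine Con.conGen_le.mpr ?_
  rintro _ _ ⟨σ, hσ, w, rfl, rfl⟩
  have hσw (i) : orbitCoord hfree (σ (w i)) =
      ((orbitCoord hfree (w i)).1, ⟨σ, hσ⟩ * (orbitCoord hfree (w i)).2) :=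
    orbitCoord_smul hfree ⟨σ, hσ⟩ (w i)
  refine ⟨by simp [Function.comp_def, hσw], ⟨σ, hσ⟩⁻¹, fun c => ?_⟩
  simp only [FreeMonoid.toList_ofList]
  rw [residueProd_of_length_eq _ _ (List.length_ofFn),
    residueProd_of_length_eq _ _ (List.length_ofFn)]
  simp [hσw]

theorem IsNormal.orbitCoord_getElem_snd {x : List (Fin n)} (hx : IsNormal l reps x) {s : ℕ}
    (hs : s < x.length) (hls : l - 1 ≤ s) : (orbitCoord hfree x[s]).2 = 1 := by
  obtain ⟨u, v, hu, rfl⟩ := hx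
  rw [List.getElem_append_right (by omega), List.getElem_map, orbitCoord_reps]

theorem IsNormal.residueProd_last_eq_one [NeZero l] {x : List (Fin n)}
    (hx : IsNormal l reps x) :
    residueProd l (fun a => (orbitCoord hfree a).2) x ((l - 1 : ℕ) : ZMod l) = 1 := by
  refine residueProd_eq_one _ _ fun s hs hsc => hx.orbitCoord_getElem_snd hfree hs ?_
  by_contra! hsl
  have := ZMod.eq_of_natCast_eq_of_lt (by omega) (Nat.sub_one_lt (NeZero.ne l)) hsc
  omega

theorem IsNormal.residueProd_eq_of_lt {x : List (Fin n)} (hx : IsNormal l reps x) {s : ℕ}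
    (hs : s < x.length) (hsl : s < l - 1) :
    residueProd l (fun a => (orbitCoord hfree a).2) x s = (orbitCoord hfree x[s]).2 := by
  refine residueProd_eq_getElem _ _ hs rfl fun s' hs' hne hsc =>
    hx.orbitCoord_getElem_snd hfree hs' ?_
  by_contra! hsl'
  exact hne (ZMod.eq_of_natCast_eq_of_lt (by omega) (by omega) hsc)

theorem IsNormal.eq_of_residueCon [NeZero l] [IsMulCommutative H] {x y : List (Fin n)}
    (hx : IsNormal l reps x) (hy : IsNormal l reps y)
    (hxy : residueCon l (fun a => (orbitCoord hfree a).1) (fun a => (orbitCoord hfree a).2)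
      (.ofList x) (.ofList y)) : x = y := by
  obtain ⟨horb, τ, hτ⟩ := hxy
  simp only [FreeMonoid.toList_ofList] at horb hτ
  have hτ1 : 1 = τ := by
    simpa [hx.residueProd_last_eq_one, hy.residueProd_last_eq_one] using
      hτ ((l - 1 : ℕ) : ZMod l)
  have hlen : x.length = y.length := by simpa using congrArg List.length horb
  refine List.ext_getElem hlen fun s hsx hsy => (orbitCoord hfree).injective (Prod.ext ?_ ?_)
  · simpa [hsx, hsy] using congrArg (·[s]?) horb
  · by_cases hs : s < l - 1
    · rw [← hx.residueProd_eq_of_lt hfree hsx hs, ← hy.residueProd_eq_of_lt hfree hsy hs,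
        hτ, ← hτ1, one_mul]
    · rw [hx.orbitCoord_getElem_snd hfree hsx (by omega),
        hy.orbitCoord_getElem_snd hfree hsy (by omega)]

include hfree in
theorem normalWord_injective : Injective (normalWord (l := l) (H := H) reps) := by
  have hreps (w : FreeMonoid (Fin r)) :
      ∀ a ∈ w.toList.map reps, (orbitCoord hfree a).2 = 1 := by
    simp [orbitCoord_reps]
  have hσ (t : Fin r) (σ : {σ : H // σ ≠ 1}) :
      (orbitCoord hfree ((σ.1 : Perm (Fin n)) (reps t))).2 ≠ 1 := by
    simpa [orbitCoord_smul, orbitCoord_reps] using σ.2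
  have hw {w w' : FreeMonoid (Fin r)} (h : w.toList.map reps = w'.toList.map reps) : w = w' :=
    FreeMonoid.toList.injective <| List.map_injective_iff.mpr
      (fun t t' htt' => by simpa [orbitCoord_reps] using congrArg (orbitCoord hfree) htt') h
  rintro ⟨_ | ⟨k, j, t, σ⟩, w⟩ ⟨_ | ⟨k', j', t', σ'⟩, w'⟩ h <;>
    simp only [normalWord, basisWord, List.nil_append, List.append_assoc,
      List.singleton_append] at h
  · rw [hw h]
  · exact absurd (hreps w _ (by simp [h])) (hσ t' σ')
  · exact absurd (hreps w' _ (by simp [← h])) (hσ t σ)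
  obtain ⟨hj, hσt, hw'⟩ := List.eq_of_append_cons_eq (p := fun a => (orbitCoord hfree a).2 = 1)
    (hσ t σ) (hσ t' σ') (hreps w) (hreps w') h
  obtain ⟨hk, hj⟩ := Sigma.mk.inj_iff.mp (List.ofFn_inj'.mp hj)
  obtain rfl := Fin.ext hk
  obtain rfl := eq_of_heq hj
  have htσ := congrArg (orbitCoord hfree) hσt
  simp only [orbitCoord_smul, orbitCoord_reps, mul_one, Prod.mk.injEq] at htσ
  obtain ⟨rfl, hσσ'⟩ := htσ
  obtain rfl := Subtype.ext hσσ'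
  rw [hw hw']

include hfree in
theorem IsNormal.exists_normalWord_eq {x : List (Fin n)} (hx : IsNormal l reps x) :
    ∃ p : BasisIdx n l r H × FreeMonoid (Fin r), normalWord reps p = x := by
  obtain ⟨u, v, hu, rfl⟩ := hx
  have hmap {y : List (Fin n)} (hy : ∀ a ∈ y, (orbitCoord hfree a).2 = 1) :
      (y.map fun a => (orbitCoord hfree a).1).map reps = y := by
    rw [List.map_map]
    exact (List.map_congr_left fun a ha => reps_orbitCoord_fst hfree (hy a ha)).trans y.map_id
  rcases List.forall_or_exists_append_cons (fun a => (orbitCoord hfree a).2 = 1) u with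
    hu1 | ⟨u₁, a, u₂, rfl, ha, hu₂⟩
  · refine ⟨(.inl (), .ofList ((u.map fun a => (orbitCoord hfree a).1) ++ v)), ?_⟩
    simp [normalWord, basisWord, hmap hu1]
  · refine ⟨(.inr ⟨⟨u₁.length, by simp at hu; omega⟩, fun i => u₁[i],
      (orbitCoord hfree a).1, ⟨(orbitCoord hfree a).2, ha⟩⟩,
      .ofList ((u₂.map fun a => (orbitCoord hfree a).1) ++ v)), ?_⟩
    simp [normalWord, basisWord, hmap hu₂, orbitCoord_snd_apply_reps]

include hfree in
theorem bijective_mk_normalWord [NeZero l] [IsMulCommutative H] :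
    Bijective fun p : BasisIdx n l r H × FreeMonoid (Fin r) =>
      (permCon n l H).mk' (.ofList (normalWord reps p)) := by
  refine ⟨fun p p' h => normalWord_injective hfree ?_, fun s => ?_⟩
  · exact (isNormal_normalWord (reps := reps) p).eq_of_residueCon hfree (isNormal_normalWord p')
      (permCon_le_residueCon hfree ((permCon n l H).eq.mp h))
  · obtain ⟨x, rfl⟩ := (permCon n l H).mk'_surjective s
    obtain ⟨y, hy, hxy⟩ := exists_isNormal_permCon (l := l) hfree x.toList
    obtain ⟨p, rfl⟩ := hy.exists_normalWord_eq hfree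
    exact ⟨p, (permCon n l H).eq.mpr (by simpa using (permCon n l H).symm hxy)⟩

end Free

end PermCon

theorem free_module_over_free_algebra_general (n l : ℕ) (hl : 2 ≤ l) (H : Subgroup (Equiv.Perm (Fin n)))
    (hsr : ∀ i : Fin n, ∀ σ ∈ H, σ i = i → σ = 1)
    (hab : ∀ σ ∈ H, ∀ τ ∈ H, σ * τ = τ * σ)
    (r : ℕ) (reps : Fin r → Fin n)
    (horb : ∀ j : Fin n, ∃! t : Fin r, ∃ σ ∈ H, σ (reps t) = j)
    (K : Type) [Field K] :
    Finite (BasisIdx n l r H) ∧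
    Function.Bijective (fun g : BasisIdx n l r H →₀ FreeAlgebra K (Fin r) =>
      g.sum fun b c => basisElem K n l r H reps b *
        (FreeAlgebra.lift K fun t =>
          MonoidAlgebra.of K (SM n l H) (xg n l H (reps t))) c) := by
  have : NeZero l := ⟨by omega⟩
  have : IsMulCommutative H := ⟨⟨fun σ τ => Subtype.ext (hab σ σ.2 τ τ.2)⟩⟩
  refine ⟨inferInstanceAs (Finite (Unit ⊕ _)), ?_⟩
  have hbij := PermCon.bijective_mk_normalWord (l := l) (bijective_smul_reps hsr horb)
  simp only [PermCon.normalWord, FreeMonoid.ofList_append, map_mul] at hbij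
  simp only [PermCon.basisElem_eq_of_mk_basisWord]
  exact FreeAlgebra.bijective_sum_of_mul_lift (φ := (permCon n l H).mk'.comp (FreeMonoid.map reps))
    hbij

theorem free_module_over_free_algebra (n l : ℕ) (hl : 2 ≤ l) (H : Subgroup (Equiv.Perm (Fin n)))
    (hsr : ∀ i : Fin n, ∀ σ ∈ H, σ i = i → σ = 1)
    (hab : ∀ σ ∈ H, ∀ τ ∈ H, σ * τ = τ * σ)
    (hnt : ¬ ∀ i j : Fin n, ∃ σ ∈ H, σ i = j)
    (r : ℕ) (hr : 1 < r) (reps : Fin r → Fin n)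
    (horb : ∀ j : Fin n, ∃! t : Fin r, ∃ σ ∈ H, σ (reps t) = j)
    (K : Type) [Field K] :
    Finite (BasisIdx n l r H) ∧
    Function.Bijective (fun g : BasisIdx n l r H →₀ FreeAlgebra K (Fin r) =>
      g.sum fun b c => basisElem K n l r H reps b *
        (FreeAlgebra.lift K fun t =>
          MonoidAlgebra.of K (SM n l H) (xg n l H (reps t))) c) :=
  free_module_over_free_algebra_general n l hl H hsr hab r reps horb K
end
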